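/- arXiv:2106.09404 — 6 statements merged into one kernel-verified Lean document; each statement's English description precedes it below -/
import Mathlib

section
/- Let (R, m) be a one-dimensional Cohen-Macaulay local ring with canonical module, admitting a fractional canonical ideal C with R ⊆ C ⊆ R̄ (the integral closure of R in its total quotient ring), and suppose R̄ is a finitely generated R-module. Then the conductor R : R̄ is contained in the trace ideal of the canonical module, i.e., R : R̄ ⊆ (R : C)·C. -/
open IsLocalRing

/-- `C ⊆ Q(R)` is a fractional canonical ideal of `R`: it is a finitely generated
`R`-submodule of the total quotient ring which is dualizing for fractional ideals,
i.e. `C : (C : I) = I` for every fractional ideal `I` (a finitely generated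
`R`-submodule of `Q(R)` containing a non-zerodivisor of `R`). -/
def IsCanonicalIdeal (R : Type*) [CommRing R] (C : Submodule R (FractionRing R)) : Prop :=
  C.FG ∧ ∀ I : Submodule R (FractionRing R), I.FG →
    (∃ r ∈ nonZeroDivisors R, algebraMap R (FractionRing R) r ∈ I) → C / (C / I) = I

/-- Let `(R, 𝔪)` be a one-dimensional Cohen–Macaulay local ring
(Noetherian local, Krull dimension one, with a non-zerodivisor in `𝔪`) admitting a
fractional canonical ideal `C` with `R ⊆ C ⊆ R̄`, such that the integral closure `R̄`
of `R` in `Q(R)` is a finitely generated `R`-module. Then `R : R̄ ⊆ (R : C)·C`. -/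
theorem farFlung_conductor_le_trace (R : Type*) [CommRing R] [IsNoetherianRing R] [IsLocalRing R]
    (hdim : ringKrullDim R = 1)
    (hCM : ∃ x ∈ maximalIdeal R, x ∈ nonZeroDivisors R)
    (C : Submodule R (FractionRing R))
    (hcan : IsCanonicalIdeal R C)
    (hRC : (1 : Submodule R (FractionRing R)) ≤ C)
    (hCRbar : C ≤ Subalgebra.toSubmodule (integralClosure R (FractionRing R)))
    (hfin : (Subalgebra.toSubmodule (integralClosure R (FractionRing R))).FG) :
    (1 : Submodule R (FractionRing R)) /
        Subalgebra.toSubmodule (integralClosure R (FractionRing R)) ≤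
      ((1 : Submodule R (FractionRing R)) / C) * C := by
  intro x hx
  have hx' : x ∈ (1 : Submodule R (FractionRing R)) / C := by
    rw [Submodule.mem_div_iff_forall_mul_mem] at hx ⊢
    exact fun y hy => hx y (hCRbar hy)
  have h1 : (1 : FractionRing R) ∈ C := Submodule.one_le.mp hRC
  simpa using Submodule.mul_mem_mul hx' h1
end

section
/- Let (R, m) be a one-dimensional Cohen-Macaulay local ring satisfying conditions (a)-(c), and suppose the fractional canonical ideal C satisfies C² = R̄. Then R : R̄ = R : C. -/
open IsLocalRing

/-- Let `(R, 𝔪)` be a one-dimensional Cohen–Macaulay local ring with a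
fractional canonical ideal `C`, `R ⊆ C ⊆ R̄`, `R̄` module-finite over `R` and local.
If `C² = R̄` then `R : R̄ = R : C`. -/
theorem colon_integralClosure_eq_colon_canonical
    (R : Type*) [CommRing R] [IsNoetherianRing R] [IsLocalRing R]
    (hdim : ringKrullDim R = 1)
    (hCM : ∃ x ∈ maximalIdeal R, x ∈ nonZeroDivisors R)
    (C : Submodule R (FractionRing R))
    (hcan : IsCanonicalIdeal R C)
    (hRC : (1 : Submodule R (FractionRing R)) ≤ C)
    (hCRbar : C ≤ Subalgebra.toSubmodule (integralClosure R (FractionRing R)))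
    (hfin : (Subalgebra.toSubmodule (integralClosure R (FractionRing R))).FG)
    (hloc : IsLocalRing (integralClosure R (FractionRing R)))
    (hsq : C * C = Subalgebra.toSubmodule (integralClosure R (FractionRing R))) :
    (1 : Submodule R (FractionRing R)) /
        Subalgebra.toSubmodule (integralClosure R (FractionRing R)) =
      (1 : Submodule R (FractionRing R)) / C := by
  set A := FractionRing R
  set O := Subalgebra.toSubmodule (integralClosure R A) with hO
  -- `C / 1 = C`
  have hdiv1 : C / (1 : Submodule R A) = C := by
    apply le_antisymm
    · intro x hx
      simpa using Submodule.mem_div_iff_forall_mul_mem.mp hx 1 (Submodule.one_le.mp le_rfl)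
    · rw [Submodule.le_div_iff_mul_le, mul_one]
  -- `C / C = 1` by duality applied to `I = 1`
  have hCC : C / C = (1 : Submodule R A) := by
    have h1fg : (1 : Submodule R A).FG := by
      refine ⟨{1}, ?_⟩
      simp [Submodule.one_eq_span]
    have h1mem : ∃ r ∈ nonZeroDivisors R, algebraMap R A r ∈ (1 : Submodule R A) := by
      exact ⟨1, Submonoid.one_mem _, by rw [map_one]; exact Submodule.one_le.mp le_rfl⟩
    have := hcan.2 1 h1fg h1mem
    rwa [hdiv1] at this
  have hone : (1 : A) ∈ C := Submodule.one_le.mp hRC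
  -- `O * O = O`
  have hOO : O * O = O := by
    apply le_antisymm
    · refine Submodule.mul_le.mpr fun x hx y hy => ?_
      exact (integralClosure R A).mul_mem hx hy
    · calc O = O * 1 := (mul_one O).symm
        _ ≤ O * O := by
          refine mul_le_mul_right ?_ O
          exact le_trans hRC hCRbar
  set f := (1 : Submodule R A) / C with hf
  -- `f * C ≤ 1`
  have hfC : f * C ≤ 1 := by
    rw [← Submodule.le_div_iff_mul_le]
  -- `f ≤ 1`
  have hf1 : f ≤ 1 := fun x hx => by
    simpa using Submodule.mem_div_iff_forall_mul_mem.mp hx 1 hone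
  -- key: `f * O ≤ f`
  have hkey : f * O ≤ f := by
    have h1 : f * O ≤ C / (C * C) := by
      rw [Submodule.le_div_iff_mul_le, hsq, mul_assoc, hOO]
      calc f * O = f * (C * C) := by rw [hsq]
        _ = (f * C) * C := by rw [mul_assoc]
        _ ≤ 1 * C := mul_le_mul_left hfC C
        _ = C := one_mul C
    refine le_trans h1 ?_
    -- `C / (C * C) ≤ 1 / C`
    intro x hx
    rw [hf, Submodule.mem_div_iff_forall_mul_mem]
    intro y hy
    rw [← hCC, Submodule.mem_div_iff_forall_mul_mem]
    intro z hz
    rw [mul_assoc]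
    exact Submodule.mem_div_iff_forall_mul_mem.mp hx _ (Submodule.mul_mem_mul hy hz)
  apply le_antisymm
  · -- since `C ≤ O`
    intro x hx
    rw [hf] at *
    rw [Submodule.mem_div_iff_forall_mul_mem] at hx ⊢
    exact fun y hy => hx y (hCRbar hy)
  · -- `f ≤ 1 / O` since `f * O ≤ f ≤ 1`
    rw [Submodule.le_div_iff_mul_le]
    exact le_trans hkey hf1
end

section
/- Let K be a field and H a numerical semigroup such that the semigroup ring K[[H]] has Cohen-Macaulay type 2 and is not symmetric. Then K[[H]] is far-flung Gorenstein if and only if H = ⟨3, 3n+1, 3n+2⟩ for some integer n > 0. -/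
set_option synthInstance.maxHeartbeats 400000

open PowerSeries

/-- The numerical semigroup ring `K[[H]] = K[[tʰ : h ∈ H]] ⊆ K[[t]]`: the subalgebra of
power series supported on `H`. -/
noncomputable def sgRing (K : Type*) [Field K] (H : AddSubmonoid ℕ) :
    Subalgebra K (PowerSeries K) where
  carrier := {f | ∀ n : ℕ, n ∉ H → PowerSeries.coeff (R := K) n f = 0}
  mul_mem' := by
    intro f g hf hg n hn
    rw [PowerSeries.coeff_mul]
    apply Finset.sum_eq_zero
    rintro ⟨i, j⟩ hij
    rw [Finset.HasAntidiagonal.mem_antidiagonal] at hij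
    by_cases hi : i ∈ H
    · have hj : j ∉ H := fun hj => hn (hij ▸ H.add_mem hi hj)
      simp [hg j hj]
    · simp [hf i hi]
  add_mem' := by
    intro f g hf hg n hn
    simp [hf n hn, hg n hn]
  one_mem' := by
    intro n hn
    have h0 : n ≠ 0 := fun h => hn (h ▸ H.zero_mem)
    simp [PowerSeries.coeff_one, h0]
  algebraMap_mem' := by
    intro k n hn
    have h0 : n ≠ 0 := fun h => hn (h ▸ H.zero_mem)
    simp [PowerSeries.algebraMap_apply, PowerSeries.coeff_C, h0]

/-- The set of pseudo-Frobenius numbers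
`PF(H) = {x ∈ ℤ \ H : x + h ∈ H for all 0 ≠ h ∈ H}`. -/
def pseudoFrobenius (H : AddSubmonoid ℕ) : Set ℤ :=
  {x : ℤ | x ∉ (Nat.cast '' (H : Set ℕ) : Set ℤ) ∧
    ∀ h ∈ (Nat.cast '' (H : Set ℕ) : Set ℤ), h ≠ 0 →
      x + h ∈ (Nat.cast '' (H : Set ℕ) : Set ℤ)}

/-- The Frobenius number `F(H) = max (ℤ \ H)`. -/
noncomputable def frobeniusNumber (H : AddSubmonoid ℕ) : ℤ :=
  sSup {x : ℤ | x ∉ (Nat.cast '' (H : Set ℕ) : Set ℤ)}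

/-- The fractional canonical ideal `C = Σ_{α ∈ PF(H)} K[[H]]·t^{F(H)-α}` of `K[[H]]`. -/
noncomputable def canonicalIdeal (K : Type*) [Field K] (H : AddSubmonoid ℕ) :
    Submodule ↥(sgRing K H) (PowerSeries K) :=
  Submodule.span ↥(sgRing K H)
    ((fun α : ℤ => (PowerSeries.X : PowerSeries K) ^ (frobeniusNumber H - α).toNat) ''
      pseudoFrobenius H)

/-- `K[[H]]` is far-flung Gorenstein: `tr(ω) = R : R̄`, equivalently `C² = K[[t]]`
(the whole of `K[[t]]`, i.e. `⊤` as a `K[[H]]`-submodule of `K[[t]]`). -/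
def IsFarFlungGorenstein (K : Type*) [Field K] (H : AddSubmonoid ℕ) : Prop :=
  canonicalIdeal K H * canonicalIdeal K H = ⊤


open Pointwise

section Basic
variable {H : AddSubmonoid ℕ}

lemma natCast_mem_image {m : ℕ} :
    (m : ℤ) ∈ (Nat.cast '' (H : Set ℕ) : Set ℤ) ↔ m ∈ H := by
  constructor
  · rintro ⟨k, hk, hke⟩
    rwa [Nat.cast_inj.mp hke] at hk
  · intro hm; exact ⟨m, hm, rfl⟩

lemma mem_image_iff {x : ℤ} :
    x ∈ (Nat.cast '' (H : Set ℕ) : Set ℤ) ↔ 0 ≤ x ∧ x.toNat ∈ H := by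
  constructor
  · rintro ⟨k, hk, rfl⟩
    exact ⟨Int.natCast_nonneg k, by simpa using hk⟩
  · rintro ⟨h0, hm⟩
    exact ⟨x.toNat, hm, Int.toNat_of_nonneg h0⟩

lemma exists_bound (hfin : ((H : Set ℕ)ᶜ).Finite) : ∃ N : ℕ, ∀ n, N ≤ n → n ∈ H := by
  obtain ⟨N, hN⟩ := hfin.bddAbove
  exact ⟨N + 1, fun n hn => by
    by_contra hc
    exact absurd (hN hc) (by omega)⟩

lemma bddAbove_gaps (hfin : ((H : Set ℕ)ᶜ).Finite) :
    BddAbove {x : ℤ | x ∉ (Nat.cast '' (H : Set ℕ) : Set ℤ)} := by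
  obtain ⟨N, hN⟩ := exists_bound hfin
  refine ⟨(N : ℤ), fun x hx => ?_⟩
  by_contra hc
  push_neg at hc
  exact hx (mem_image_iff.mpr ⟨by omega, hN _ (by omega)⟩)

lemma frobenius_eq {F : ℤ} (hF : F ∉ (Nat.cast '' (H : Set ℕ) : Set ℤ))
    (hub : ∀ x ∉ (Nat.cast '' (H : Set ℕ) : Set ℤ), x ≤ F) :
    frobeniusNumber H = F :=
  IsGreatest.csSup_eq ⟨hF, fun x hx => hub x hx⟩

lemma le_frobenius (hfin : ((H : Set ℕ)ᶜ).Finite) {x : ℤ}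
    (hx : x ∉ (Nat.cast '' (H : Set ℕ) : Set ℤ)) : x ≤ frobeniusNumber H :=
  le_csSup (bddAbove_gaps hfin) hx


variable {K : Type*} [Field K] {H : AddSubmonoid ℕ}

lemma pow_image_mul (A B : Set ℕ) :
    ((fun c : ℕ => (X : PowerSeries K) ^ c) '' A) *
      ((fun c : ℕ => (X : PowerSeries K) ^ c) '' B) =
    (fun c : ℕ => (X : PowerSeries K) ^ c) '' (A + B) := by
  show Set.image2 (· * ·) _ _ = _
  rw [Set.image2_image_left, Set.image2_image_right]
  show _ = (fun c : ℕ => (X : PowerSeries K) ^ c) '' Set.image2 (· + ·) A B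
  rw [Set.image_image2]
  apply Set.image2_congr
  intro a _ b _
  rw [pow_add]

lemma canonical_sq (α₁ α₂ : ℤ) (hPF : pseudoFrobenius H = {α₁, α₂}) :
    canonicalIdeal K H * canonicalIdeal K H =
      Submodule.span ↥(sgRing K H) ((fun c : ℕ => (X : PowerSeries K) ^ c) ''
        (({(frobeniusNumber H - α₁).toNat, (frobeniusNumber H - α₂).toNat} : Set ℕ) +
         {(frobeniusNumber H - α₁).toNat, (frobeniusNumber H - α₂).toNat})) := by
  have himg : ((fun α : ℤ => (X : PowerSeries K) ^ (frobeniusNumber H - α).toNat) ''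
      pseudoFrobenius H) = (fun c : ℕ => (X : PowerSeries K) ^ c) ''
        {(frobeniusNumber H - α₁).toNat, (frobeniusNumber H - α₂).toNat} := by
    rw [hPF]
    rw [Set.image_pair, Set.image_pair]
  rw [canonicalIdeal, himg, Submodule.span_mul_span, pow_image_mul]

end Basic

section Bridges
variable {K : Type*} [Field K] {H : AddSubmonoid ℕ}

lemma mem_sgRing_iff {f : PowerSeries K} :
    f ∈ sgRing K H ↔ ∀ n : ℕ, n ∉ H → PowerSeries.coeff (R := K) n f = 0 := Iff.rfl

/-- Bridge 1: if the span of monomials with exponents in `E` is everything,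
then every natural number is covered by `E + H`. -/
lemma covered_of_span_top (E : Set ℕ)
    (h : Submodule.span ↥(sgRing K H)
      ((fun c : ℕ => (X : PowerSeries K) ^ c) '' E) = ⊤) :
    ∀ g : ℕ, ∃ c ∈ E, c ≤ g ∧ g - c ∈ H := by
  intro g
  by_contra hnc
  push_neg at hnc
  -- the submodule of power series supported on covered exponents
  set M : Submodule ↥(sgRing K H) (PowerSeries K) :=
    { carrier := {f | ∀ k : ℕ, (∀ c ∈ E, c ≤ k → k - c ∉ H) → PowerSeries.coeff (R := K) k f = 0}
      add_mem' := by intro f g hf hg k hk; simp [hf k hk, hg k hk]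
      zero_mem' := by intro k hk; simp
      smul_mem' := by
        intro s f hf k hk
        show PowerSeries.coeff (R := K) k ((s : PowerSeries K) * f) = 0
        rw [PowerSeries.coeff_mul]
        apply Finset.sum_eq_zero
        rintro ⟨i, j⟩ hij
        rw [Finset.HasAntidiagonal.mem_antidiagonal] at hij
        by_cases hi : i ∈ H
        · have hj : ∀ c ∈ E, c ≤ j → j - c ∉ H := by
            intro c hc hcj hjc
            exact hk c hc (le_trans hcj (hij ▸ Nat.le_add_left j i))
              (by
                have : k - c = i + (j - c) := by omega
                rw [this]; exact H.add_mem hi hjc)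
          simp [hf j hj]
        · simp [s.2 i hi] } with hM
  have hsub : Submodule.span ↥(sgRing K H)
      ((fun c : ℕ => (X : PowerSeries K) ^ c) '' E) ≤ M := by
    rw [Submodule.span_le]
    rintro _ ⟨c, hc, rfl⟩
    intro k hk
    rw [PowerSeries.coeff_X_pow]
    have : k ≠ c := by
      intro hkc
      exact hk c hc (le_of_eq hkc.symm) (by simp [hkc, H.zero_mem])
    simp [this]
  rw [h] at hsub
  have hx : (X : PowerSeries K) ^ g ∈ M := hsub Submodule.mem_top
  have := hx g (fun c hc hcg hgc => hnc c hc hcg hgc)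
  rw [PowerSeries.coeff_X_pow] at this
  simp at this

/-- Bridge 2: if every natural number is covered by `E + H`, the span is everything. -/
lemma span_top_of_covered (E : Finset ℕ)
    (hcov : ∀ g : ℕ, ∃ c ∈ E, c ≤ g ∧ g - c ∈ H) :
    Submodule.span ↥(sgRing K H)
      ((fun c : ℕ => (X : PowerSeries K) ^ c) '' (E : Set ℕ)) = ⊤ := by
  rw [eq_top_iff]
  intro f _
  choose σ hσE hσle hσH using hcov
  set r : ℕ → PowerSeries K := fun c =>
    PowerSeries.mk (fun m => if σ (m + c) = c then PowerSeries.coeff (R := K) (m + c) f else 0)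
      with hr
  have hrmem : ∀ c, r c ∈ sgRing K H := by
    intro c m hm
    rw [hr]
    simp only [PowerSeries.coeff_mk]
    rw [if_neg]
    intro hσc
    exact hm (by have := hσH (m + c); rw [hσc] at this; simpa using this)
  have hfeq : f = ∑ c ∈ E, (⟨r c, hrmem c⟩ : ↥(sgRing K H)) • (X : PowerSeries K) ^ c := by
    ext k
    rw [map_sum]
    have hterm : ∀ c ∈ E, PowerSeries.coeff (R := K) k
        ((⟨r c, hrmem c⟩ : ↥(sgRing K H)) • (X : PowerSeries K) ^ c) =
        if σ k = c then PowerSeries.coeff (R := K) k f else 0 := by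
      intro c _
      show PowerSeries.coeff (R := K) k (r c * (X : PowerSeries K) ^ c) = _
      rw [PowerSeries.coeff_mul_X_pow']
      by_cases hck : c ≤ k
      · rw [if_pos hck, hr]
        simp only [PowerSeries.coeff_mk]
        rw [Nat.sub_add_cancel hck]
      · rw [if_neg hck, eq_comm]
        rw [if_neg]
        intro hc
        exact hck (hc ▸ hσle k)
    rw [Finset.sum_congr rfl hterm, Finset.sum_ite_eq E (σ k)
      (fun _ => PowerSeries.coeff (R := K) k f), if_pos (hσE k)]
  rw [hfeq]
  exact Submodule.sum_mem _ (fun c hc => Submodule.smul_mem _ _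
    (Submodule.subset_span ⟨c, hc, rfl⟩))

end Bridges

section NT
variable {H : AddSubmonoid ℕ}

lemma mul_mem_of_mem {m : ℕ} (hm : m ∈ H) (k : ℕ) : m * k ∈ H := by
  induction k with
  | zero => simpa using H.zero_mem
  | succ k ih => have := H.add_mem ih hm; rw [Nat.mul_succ]; exact this

lemma pf_of_one_mem (h1 : (1 : ℕ) ∈ H) : pseudoFrobenius H = {(-1 : ℤ)} := by
  have hall : ∀ n : ℕ, n ∈ H := by
    intro n
    have := mul_mem_of_mem h1 n
    simpa using this
  have him : ∀ x : ℤ, x ∈ (Nat.cast '' (H : Set ℕ) : Set ℤ) ↔ 0 ≤ x := by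
    intro x
    rw [mem_image_iff]
    exact ⟨fun h => h.1, fun h => ⟨h, hall _⟩⟩
  ext x
  simp only [pseudoFrobenius, Set.mem_setOf_eq, him, Set.mem_singleton_iff]
  constructor
  · rintro ⟨hx, hcond⟩
    have := hcond 1 (by norm_num) (by norm_num)
    omega
  · rintro rfl
    exact ⟨by norm_num, fun h hh hne => by omega⟩

lemma pf_of_two_mem (hfin : ((H : Set ℕ)ᶜ).Finite) (h1 : (1 : ℕ) ∉ H)
    (h2 : (2 : ℕ) ∈ H) : ∃ c : ℕ, pseudoFrobenius H = {((c : ℤ) - 2)} := by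
  classical
  obtain ⟨N, hN⟩ := exists_bound hfin
  have hex : ∃ x, x ∈ H ∧ x % 2 = 1 := ⟨2 * N + 1, hN _ (by omega), by omega⟩
  have hex' : ∃ x, x ∈ H ∧ x % 2 = 1 := hex
  set c := Nat.find hex' with hc
  obtain ⟨hcH, hcodd⟩ := Nat.find_spec hex'
  have hcmin : ∀ x, x ∈ H → x % 2 = 1 → c ≤ x := fun x hx ho =>
    Nat.find_le ⟨hx, ho⟩
  have hc3 : 3 ≤ c := by
    have : c ≠ 1 := fun h => h1 (h ▸ hcH)
    omega
  have Hset : ∀ x : ℕ, x ∈ H ↔ (x % 2 = 0 ∨ (x % 2 = 1 ∧ c ≤ x)) := by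
    intro x
    constructor
    · intro hx
      rcases Nat.even_or_odd x with he | ho
      · left; exact Nat.even_iff.mp he
      · right
        have hxo : x % 2 = 1 := Nat.odd_iff.mp ho
        exact ⟨hxo, hcmin x hx hxo⟩
    · rintro (he | ⟨ho, hcx⟩)
      · have : x = 2 * (x / 2) := by omega
        rw [this]
        simpa [Nat.mul_comm] using mul_mem_of_mem h2 (x / 2)
      · have : x = c + 2 * ((x - c) / 2) := by omega
        rw [this]
        exact H.add_mem hcH (by simpa [Nat.mul_comm] using mul_mem_of_mem h2 ((x - c) / 2))
  refine ⟨c, ?_⟩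
  ext x
  simp only [pseudoFrobenius, Set.mem_setOf_eq, Set.mem_singleton_iff]
  constructor
  · rintro ⟨hx, hcond⟩
    have h2im : (2 : ℤ) ∈ (Nat.cast '' (H : Set ℕ) : Set ℤ) := by
      exact_mod_cast natCast_mem_image.mpr h2
    have hx2 : x + 2 ∈ (Nat.cast '' (H : Set ℕ) : Set ℤ) := hcond 2 h2im (by norm_num)
    have hx2' := mem_image_iff.mp hx2
    rcases lt_or_ge x 0 with hneg | hpos
    · -- x = -1 or x = -2
      have : x = -1 ∨ x = -2 := by omega
      rcases this with rfl | rfl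
      · exfalso
        apply h1
        have : ((-1 : ℤ) + 2).toNat = 1 := by norm_num
        rw [← this]; exact hx2'.2
      · exfalso
        have hcim : (c : ℤ) ∈ (Nat.cast '' (H : Set ℕ) : Set ℤ) := natCast_mem_image.mpr hcH
        have := hcond c hcim (by exact_mod_cast (by omega : (c : ℕ) ≠ 0))
        have h' := mem_image_iff.mp this
        have : (-2 + (c : ℤ)).toNat = c - 2 := by omega
        rw [this] at h'
        have := (Hset (c - 2)).mp h'.2
        omega
    · have hxnat : x.toNat ∉ H := fun h => hx (mem_image_iff.mpr ⟨hpos, h⟩)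
      rw [Hset] at hxnat
      push_neg at hxnat
      have hx2nat : (x + 2).toNat ∈ H := hx2'.2
      rw [Hset] at hx2nat
      have h1' : x.toNat % 2 = 1 := by omega
      have h2' : x.toNat < c := by omega
      have : (x + 2).toNat = x.toNat + 2 := by omega
      rw [this] at hx2nat
      omega
  · rintro rfl
    have hc2 : ((c : ℤ) - 2).toNat = c - 2 := by omega
    constructor
    · intro hmem
      have := mem_image_iff.mp hmem
      rw [hc2] at this
      have := (Hset (c - 2)).mp this.2
      omega
    · intro h hh hne
      obtain ⟨m, hm, rfl⟩ := hh
      have hm2 : 2 ≤ m := by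
        have := (Hset m).mp hm
        rcases this with he | ho
        · have : m ≠ 0 := by exact_mod_cast hne
          omega
        · omega
      have : ((c : ℤ) - 2 + m) = ((c - 2 + m : ℕ) : ℤ) := by omega
      rw [this]
      apply natCast_mem_image.mpr
      rw [Hset]
      have := (Hset m).mp hm
      omega
end NT

section ForwardNT
variable {H : AddSubmonoid ℕ}

lemma forward_nt (hfin : ((H : Set ℕ)ᶜ).Finite) (h1 : (1 : ℕ) ∉ H) (h2 : (2 : ℕ) ∉ H)
    (hcov : ∀ g : ℕ, g ∉ H → (1 ≤ g ∧ g - 1 ∈ H) ∨ (2 ≤ g ∧ g - 2 ∈ H))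
    (hf : (frobeniusNumber H - 1) ∉ (Nat.cast '' (H : Set ℕ) : Set ℤ)) :
    ∃ n : ℕ, 0 < n ∧ H = AddSubmonoid.closure {3, 3 * n + 1, 3 * n + 2} := by
  classical
  have h3 : (3 : ℕ) ∈ H := by
    by_contra h3
    rcases hcov 3 h3 with ⟨_, h⟩ | ⟨_, h⟩
    · exact h2 h
    · exact h1 h
  have hmul3 : ∀ k : ℕ, 3 * k ∈ H := fun k => mul_mem_of_mem h3 k
  obtain ⟨N, hN⟩ := exists_bound hfin
  have hexa : ∃ x, x ∈ H ∧ x % 3 = 1 := ⟨3 * N + 1, hN _ (by omega), by omega⟩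
  have hexb : ∃ x, x ∈ H ∧ x % 3 = 2 := ⟨3 * N + 2, hN _ (by omega), by omega⟩
  set a := Nat.find hexa with ha
  set b := Nat.find hexb with hb
  obtain ⟨haH, ham⟩ := Nat.find_spec hexa
  obtain ⟨hbH, hbm⟩ := Nat.find_spec hexb
  have hamin : ∀ x, x ∈ H → x % 3 = 1 → a ≤ x := fun x hx ho => Nat.find_le ⟨hx, ho⟩
  have hbmin : ∀ x, x ∈ H → x % 3 = 2 → b ≤ x := fun x hx ho => Nat.find_le ⟨hx, ho⟩
  clear_value a b
  rw [← ha] at haH ham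
  rw [← hb] at hbH hbm
  have ha4 : 4 ≤ a := by
    have : a ≠ 1 := fun h => h1 (h ▸ haH)
    omega
  have hb5 : 5 ≤ b := by
    have : b ≠ 2 := fun h => h2 (h ▸ hbH)
    omega
  obtain ⟨m, hmc, hg1, hg2⟩ : ∃ m : ℕ, (m = a - 3 ∨ m = b - 3) ∧ a - 3 ≤ m ∧ b - 3 ≤ m :=
    ⟨max (a - 3) (b - 3), max_choice _ _, le_max_left _ _, le_max_right _ _⟩
  have Hset : ∀ x : ℕ, x ∈ H ↔
      (x % 3 = 0 ∨ (x % 3 = 1 ∧ a ≤ x) ∨ (x % 3 = 2 ∧ b ≤ x)) := by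
    intro x
    constructor
    · intro hx
      have : x % 3 = 0 ∨ x % 3 = 1 ∨ x % 3 = 2 := by omega
      rcases this with h | h | h
      · exact Or.inl h
      · exact Or.inr (Or.inl ⟨h, hamin x hx h⟩)
      · exact Or.inr (Or.inr ⟨h, hbmin x hx h⟩)
    · rintro (h | ⟨h, hax⟩ | ⟨h, hbx⟩)
      · have : x = 3 * (x / 3) := by omega
        rw [this]; exact hmul3 _
      · have : x = a + 3 * ((x - a) / 3) := by omega
        rw [this]; exact H.add_mem haH (hmul3 _)
      · have : x = b + 3 * ((x - b) / 3) := by omega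
        rw [this]; exact H.add_mem hbH (hmul3 _)
  have hF : frobeniusNumber H = ((m : ℕ) : ℤ) := by
    apply frobenius_eq
    · rw [natCast_mem_image, Hset]
      omega
    · intro x hx
      rw [mem_image_iff] at hx
      push_neg at hx
      rcases lt_or_ge x 0 with hneg | hpos
      · omega
      · have := hx hpos
        rw [Hset] at this
        push_neg at this
        omega
  rw [hF] at hf
  rw [mem_image_iff] at hf
  push_neg at hf
  have hmax4 : 1 ≤ m := by omega
  have hfH : (m) - 1 ∉ H := by
    have h0 : (0 : ℤ) ≤ ((m : ℕ) : ℤ) - 1 := by omega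
    have := hf h0
    have he : (((m : ℕ) : ℤ) - 1).toNat = (m) - 1 := by
      omega
    rwa [he] at this
  rw [Hset] at hfH
  push_neg at hfH
  -- show b = a + 1
  have hba : b = a + 1 := by
    rcases le_or_gt (b - 3) (a - 3) with hle | hlt
    · exfalso
      have hm : m = a - 3 := by omega
      rw [hm] at hfH
      omega
    · have hm : m = b - 3 := by omega
      rw [hm] at hfH
      omega
  refine ⟨a / 3, Nat.div_pos (by omega) (by norm_num), ?_⟩
  have han : a = 3 * (a / 3) + 1 := by omega
  apply le_antisymm
  · intro x hx
    rw [Hset] at hx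
    have hg3 : (3 : ℕ) ∈ AddSubmonoid.closure ({3, 3 * (a / 3) + 1, 3 * (a / 3) + 2} : Set ℕ) :=
      AddSubmonoid.subset_closure (by simp)
    have hga : a ∈ AddSubmonoid.closure ({3, 3 * (a / 3) + 1, 3 * (a / 3) + 2} : Set ℕ) :=
      AddSubmonoid.subset_closure (by rw [← han]; simp)
    have hgb : b ∈ AddSubmonoid.closure ({3, 3 * (a / 3) + 1, 3 * (a / 3) + 2} : Set ℕ) :=
      AddSubmonoid.subset_closure (by
        have : b = 3 * (a / 3) + 2 := by omega
        rw [this]; simp)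
    have hmul3' : ∀ k : ℕ, 3 * k ∈
        AddSubmonoid.closure ({3, 3 * (a / 3) + 1, 3 * (a / 3) + 2} : Set ℕ) :=
      fun k => mul_mem_of_mem hg3 k
    rcases hx with h | ⟨h, hax⟩ | ⟨h, hbx⟩
    · have : x = 3 * (x / 3) := by omega
      rw [this]; exact hmul3' _
    · have : x = a + 3 * ((x - a) / 3) := by omega
      rw [this]; exact AddSubmonoid.add_mem _ hga (hmul3' _)
    · have : x = b + 3 * ((x - b) / 3) := by omega
      rw [this]; exact AddSubmonoid.add_mem _ hgb (hmul3' _)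
  · rw [AddSubmonoid.closure_le]
    rintro x hx
    simp only [Set.mem_insert_iff, Set.mem_singleton_iff] at hx
    rcases hx with rfl | rfl | rfl
    · exact h3
    · rwa [← han]
    · show 3 * (a / 3) + 2 ∈ H
      have : 3 * (a / 3) + 2 = b := by omega
      rw [this]; exact hbH
end ForwardNT

/-- Let `K` be a field and `H` a numerical semigroup such that `K[[H]]`
has Cohen–Macaulay type `2` (i.e. `|PF(H)| = 2`) and is not symmetric. Then `K[[H]]` is
far-flung Gorenstein iff `H = ⟨3, 3n+1, 3n+2⟩` for some integer `n > 0`. -/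
theorem farFlungGorenstein_type_two_iff (K : Type*) [Field K] (H : AddSubmonoid ℕ)
    (hfin : ((H : Set ℕ)ᶜ).Finite)
    (htype : (pseudoFrobenius H).ncard = 2)
    (hnotsym : ¬ ∀ z : ℤ, z ∈ (Nat.cast '' (H : Set ℕ) : Set ℤ) ↔
      frobeniusNumber H - z ∉ (Nat.cast '' (H : Set ℕ) : Set ℤ)) :
    IsFarFlungGorenstein K H ↔
      ∃ n : ℕ, 0 < n ∧ H = AddSubmonoid.closure {3, 3 * n + 1, 3 * n + 2} := by
  constructor
  · -- forward direction
    intro hFFG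
    obtain ⟨α₁, α₂, hne, hPF⟩ := Set.ncard_eq_two.mp htype
    have h1 : (1 : ℕ) ∉ H := by
      intro h1m
      rw [pf_of_one_mem h1m] at htype
      simp at htype
    have h2 : (2 : ℕ) ∉ H := by
      intro h2m
      obtain ⟨c, hPF1⟩ := pf_of_two_mem hfin h1 h2m
      rw [hPF1] at htype
      simp at htype
    have hsq := canonical_sq (K := K) α₁ α₂ hPF
    have htop := hsq.symm.trans hFFG
    have hcovraw := covered_of_span_top _ htop
    set e₁ := (frobeniusNumber H - α₁).toNat with he₁
    set e₂ := (frobeniusNumber H - α₂).toNat with he₂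
    -- from the gap 1: the exponents are {0, 1}
    have hE : (e₁ = 0 ∧ e₂ = 1) ∨ (e₁ = 1 ∧ e₂ = 0) := by
      obtain ⟨c, hcE, hc1, hcH⟩ := hcovraw 1
      rw [Set.mem_add] at hcE
      obtain ⟨u, hu, v, hv, huv⟩ := hcE
      simp only [Set.mem_insert_iff, Set.mem_singleton_iff] at hu hv
      have hc0 : c ≠ 0 := by
        intro h0
        rw [h0] at hcH
        exact h1 hcH
      have hc : c = 1 := by omega
      rcases hu with rfl | rfl <;> rcases hv with h | h <;> omega
    -- f = F - 1 is a gap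
    have hf : (frobeniusNumber H - 1) ∉ (Nat.cast '' (H : Set ℕ) : Set ℤ) := by
      rcases hE with ⟨_, h⟩ | ⟨h, _⟩
      · have hα : α₂ = frobeniusNumber H - 1 := by omega
        have hm : α₂ ∈ pseudoFrobenius H := by rw [hPF]; simp
        exact hα ▸ hm.1
      · have hα : α₁ = frobeniusNumber H - 1 := by omega
        have hm : α₁ ∈ pseudoFrobenius H := by rw [hPF]; simp
        exact hα ▸ hm.1
    have hcov : ∀ g : ℕ, g ∉ H → (1 ≤ g ∧ g - 1 ∈ H) ∨ (2 ≤ g ∧ g - 2 ∈ H) := by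
      intro g hg
      obtain ⟨c, hcE, hcg, hcH⟩ := hcovraw g
      rw [Set.mem_add] at hcE
      obtain ⟨u, hu, v, hv, huv⟩ := hcE
      simp only [Set.mem_insert_iff, Set.mem_singleton_iff] at hu hv
      have hc0 : c ≠ 0 := by
        intro h0
        rw [h0, Nat.sub_zero] at hcH
        exact hg hcH
      have : c = 1 ∨ c = 2 := by
        rcases hu with rfl | rfl <;> rcases hv with h | h <;> omega
      rcases this with rfl | rfl
      · exact Or.inl ⟨by omega, hcH⟩
      · exact Or.inr ⟨by omega, hcH⟩
    exact forward_nt hfin h1 h2 hcov hf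
  · -- reverse direction
    rintro ⟨n, hn, hH⟩
    subst hH
    set H := AddSubmonoid.closure ({3, 3 * n + 1, 3 * n + 2} : Set ℕ) with hHdef
    have hg3 : (3 : ℕ) ∈ H := AddSubmonoid.subset_closure (by simp)
    have hga : (3 * n + 1 : ℕ) ∈ H := AddSubmonoid.subset_closure (by simp)
    have hgb : (3 * n + 2 : ℕ) ∈ H := AddSubmonoid.subset_closure (by simp)
    have Hset : ∀ x : ℕ, x ∈ H ↔ (x % 3 = 0 ∨ 3 * n + 1 ≤ x) := by
      intro x
      constructor
      · intro hx
        induction hx using AddSubmonoid.closure_induction with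
        | mem y hy =>
          simp only [Set.mem_insert_iff, Set.mem_singleton_iff] at hy
          rcases hy with rfl | rfl | rfl <;> omega
        | zero => omega
        | add a b _ _ ha hb => omega
      · rintro (h | h)
        · have : x = 3 * (x / 3) := by omega
          rw [this]; exact mul_mem_of_mem hg3 _
        · have h3 : x % 3 = 0 ∨ x % 3 = 1 ∨ x % 3 = 2 := by omega
          rcases h3 with h3 | h3 | h3
          · have : x = 3 * (x / 3) := by omega
            rw [this]; exact mul_mem_of_mem hg3 _
          · have : x = (3 * n + 1) + 3 * ((x - (3 * n + 1)) / 3) := by omega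
            rw [this]; exact H.add_mem hga (mul_mem_of_mem hg3 _)
          · have : x = (3 * n + 2) + 3 * ((x - (3 * n + 2)) / 3) := by omega
            rw [this]; exact H.add_mem hgb (mul_mem_of_mem hg3 _)
    have hPF : pseudoFrobenius H = {3 * (n : ℤ) - 2, 3 * (n : ℤ) - 1} := by
      have hfinPF : (pseudoFrobenius H).Finite := by
        by_contra hinf
        rw [Set.Infinite.ncard hinf] at htype
        omega
      have hsub : ({3 * (n : ℤ) - 2, 3 * (n : ℤ) - 1} : Set ℤ) ⊆ pseudoFrobenius H := by
        have hmem : ∀ w : ℤ, w = 3 * (n : ℤ) - 2 ∨ w = 3 * (n : ℤ) - 1 →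
            w ∈ pseudoFrobenius H := by
          rintro w hw
          constructor
          · intro hmem
            rw [mem_image_iff, Hset] at hmem
            omega
          · rintro h ⟨m, hm, rfl⟩ hne
            have hm3 := (Hset m).mp hm
            have hmne : m ≠ 0 := by exact_mod_cast hne
            rw [mem_image_iff, Hset]
            omega
        intro w hw
        simp only [Set.mem_insert_iff, Set.mem_singleton_iff] at hw
        exact hmem w hw
      refine (Set.eq_of_subset_of_ncard_le hsub ?_ hfinPF).symm
      rw [htype, Set.ncard_pair (by omega)]
    have hF : frobeniusNumber H = 3 * (n : ℤ) - 1 := by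
      apply frobenius_eq
      · intro hmem
        rw [mem_image_iff, Hset] at hmem
        omega
      · intro x hx
        rw [mem_image_iff] at hx
        push_neg at hx
        rcases lt_or_ge x 0 with hneg | hpos
        · omega
        · have := hx hpos
          rw [Hset] at this
          push_neg at this
          omega
    rw [IsFarFlungGorenstein, canonical_sq (3 * (n : ℤ) - 2) (3 * (n : ℤ) - 1) hPF]
    have he1 : (frobeniusNumber H - (3 * (n : ℤ) - 2)).toNat = 1 := by rw [hF]; omega
    have he2 : (frobeniusNumber H - (3 * (n : ℤ) - 1)).toNat = 0 := by rw [hF]; omega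
    rw [he1, he2]
    have hset : (({1, 0} : Set ℕ) + ({1, 0} : Set ℕ)) = (↑({0, 1, 2} : Finset ℕ) : Set ℕ) := by
      ext c
      simp only [Set.mem_add, Set.mem_insert_iff, Set.mem_singleton_iff,
        Finset.coe_insert, Finset.coe_singleton]
      constructor
      · rintro ⟨u, hu, v, hv, rfl⟩
        omega
      · intro hc
        rcases hc with rfl | rfl | rfl
        · exact ⟨0, Or.inr rfl, 0, Or.inr rfl, rfl⟩
        · exact ⟨1, Or.inl rfl, 0, Or.inr rfl, rfl⟩
        · exact ⟨1, Or.inl rfl, 1, Or.inl rfl, rfl⟩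
    rw [hset]
    apply span_top_of_covered
    intro g
    have h3 : g % 3 = 0 ∨ g % 3 = 1 ∨ g % 3 = 2 := by omega
    rcases h3 with h3 | h3 | h3
    · exact ⟨0, by simp, by omega, (Hset g).mpr (by omega)⟩
    · exact ⟨1, by simp, by omega, (Hset _).mpr (by omega)⟩
    · exact ⟨2, by simp, by omega, (Hset _).mpr (by omega)⟩
end

section
/- Let (R, m) be a one-dimensional Cohen-Macaulay local ring with R̄ module-finite over R and R̄ local. Then B = m : m (taken inside Q(R)) is a one-dimensional Cohen-Macaulay local ring with integral closure B̄ = R̄. -/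
set_option synthInstance.maxHeartbeats 400000

open IsLocalRing

/-- If `b ∈ S`, `b * c = 1` and `c` is integral over `R`, then `c ∈ S`. -/
lemma aux_inv_mem {R K : Type*} [CommRing R] [CommRing K] [Algebra R K]
    (S : Subalgebra R K) {b c : K} (hb : b ∈ S) (h1 : b * c = 1)
    (hc : IsIntegral R c) : c ∈ S := by
  obtain ⟨p, pm, hp⟩ := hc
  set n := p.natDegree with hn
  rcases Nat.eq_zero_or_pos n with h0 | hpos
  · have hp1 : p = 1 := pm.natDegree_eq_zero.mp h0
    rw [hp1, Polynomial.eval₂_one] at hp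
    have : Subsingleton K := subsingleton_of_forall_eq 0 fun y => by
      calc y = y * 1 := (mul_one y).symm
        _ = y * 0 := by rw [hp]
        _ = 0 := mul_zero y
    rw [Subsingleton.elim c 0]
    exact S.zero_mem
  · have hcb : c * b = 1 := by rw [mul_comm]; exact h1
    have hev : (0 : K) = ∑ i ∈ Finset.range (n + 1),
        algebraMap R K (p.coeff i) * c ^ i := by
      rw [← hp, Polynomial.eval₂_eq_sum_range]
    have key : (0 : K) = ∑ i ∈ Finset.range (n + 1),
        algebraMap R K (p.coeff i) * (c ^ i * b ^ (n - 1)) := by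
      calc (0 : K) = (∑ i ∈ Finset.range (n + 1),
            algebraMap R K (p.coeff i) * c ^ i) * b ^ (n - 1) := by
            rw [← hev, zero_mul]
        _ = _ := by
            rw [Finset.sum_mul]
            exact Finset.sum_congr rfl fun i _ => (mul_assoc _ _ _)
    have hterm : ∀ i < n, c ^ i * b ^ (n - 1) = b ^ (n - 1 - i) := by
      intro i hi
      have hsplit : b ^ (n - 1) = b ^ i * b ^ (n - 1 - i) := by
        rw [← pow_add]; congr 1; omega
      have hcbpow : c ^ i * b ^ i = 1 := by rw [← mul_pow, hcb, one_pow]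
      rw [hsplit, ← mul_assoc, hcbpow, one_mul]
    have htop : c ^ n * b ^ (n - 1) = c := by
      have h2 : c ^ n = c * c ^ (n - 1) := by
        rw [← pow_succ']; congr 1; omega
      rw [h2, mul_assoc, ← mul_pow, hcb, one_pow, mul_one]
    rw [Finset.sum_range_succ, htop, pm.coeff_natDegree, map_one, one_mul] at key
    have hc_eq : c = -∑ i ∈ Finset.range n,
        algebraMap R K (p.coeff i) * (c ^ i * b ^ (n - 1)) := by
      linear_combination -key
    rw [hc_eq]
    refine neg_mem (sum_mem fun i hi => ?_)
    rw [hterm i (Finset.mem_range.mp hi)]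
    exact mul_mem (S.algebraMap_mem _) (pow_mem hb _)

/-- Let `(R, 𝔪)` be a one-dimensional Cohen–Macaulay local ring with
integral closure `R̄` (in the total quotient ring `Q(R)`) module-finite over `R` and
local. Let `B` be the subalgebra of `Q(R)` whose underlying module is `𝔪 : 𝔪`. Then
`B` is a one-dimensional Cohen–Macaulay (Noetherian) local ring whose integral closure
in `Q(R)` is `R̄`. -/
theorem endomorphism_algebra_of_maximalIdeal_CM_local
    (R : Type*) [CommRing R] [IsNoetherianRing R] [IsLocalRing R]
    (hdim : ringKrullDim R = 1)
    (hCM : ∃ x ∈ maximalIdeal R, x ∈ nonZeroDivisors R)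
    (hfin : (Subalgebra.toSubmodule (integralClosure R (FractionRing R))).FG)
    (hloc : IsLocalRing (integralClosure R (FractionRing R)))
    (B : Subalgebra R (FractionRing R))
    (hB : Subalgebra.toSubmodule B =
      Submodule.map (Algebra.linearMap R (FractionRing R)) (maximalIdeal R) /
        Submodule.map (Algebra.linearMap R (FractionRing R)) (maximalIdeal R)) :
    IsNoetherianRing B ∧
      (∃ _h : IsLocalRing B, ringKrullDim B = 1 ∧
        ∃ x ∈ @IsLocalRing.maximalIdeal B _ _h, x ∈ nonZeroDivisors B) ∧
      (integralClosure B (FractionRing R) : Set (FractionRing R)) =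
        (integralClosure R (FractionRing R) : Set (FractionRing R)) := by
  classical
  set K := FractionRing R with hK
  obtain ⟨x, hxm, hxnzd⟩ := hCM
  set M : Submodule R K := Submodule.map (Algebra.linearMap R K) (maximalIdeal R) with hM
  have memB : ∀ z : K, z ∈ B ↔ ∀ y ∈ M, z * y ∈ M := fun z => by
    rw [← Subalgebra.mem_toSubmodule, hB]
    exact Submodule.mem_div_iff_forall_mul_mem
  have hinjK : Function.Injective (algebraMap R K) := IsFractionRing.injective R K
  have hxKu : IsUnit (algebraMap R K x) :=
    IsLocalization.map_units (M := nonZeroDivisors R) K ⟨x, hxnzd⟩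
  obtain ⟨u, hu⟩ := hxKu
  have hxKM : (u : K) ∈ M := by
    rw [hu]; exact ⟨x, hxm, rfl⟩
  set N : Submodule R K := M.map (LinearMap.mulLeft R ((u⁻¹ : Kˣ) : K)) with hN
  have hBleN : Subalgebra.toSubmodule B ≤ N := by
    intro z hz
    refine ⟨z * u, (memB z).mp hz _ hxKM, ?_⟩
    show ((u⁻¹ : Kˣ) : K) * (z * u) = z
    rw [mul_comm ((u⁻¹ : Kˣ) : K), mul_assoc, Units.mul_inv, mul_one]
  have hMfg : M.FG := (IsNoetherian.noetherian (maximalIdeal R)).map _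
  have hNfg : N.FG := hMfg.map _
  have hBfg : (Subalgebra.toSubmodule B).FG := by
    haveI := isNoetherian_of_fg_of_noetherian N hNfg
    have heq : Subalgebra.toSubmodule B
        = Submodule.map N.subtype ((Subalgebra.toSubmodule B).comap N.subtype) := by
      rw [Submodule.map_comap_subtype, inf_eq_right.mpr hBleN]
    rw [heq]
    exact (IsNoetherian.noetherian _).map _
  have hint : ∀ z ∈ B, IsIntegral R z := fun z hz =>
    IsIntegral.of_mem_of_fg B hBfg z hz
  haveI hBint : Algebra.IsIntegral R B :=
    ⟨fun b => (isIntegral_algHom_iff B.val Subtype.val_injective).mp (hint _ b.2)⟩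
  have hNoeth : IsNoetherianRing B :=
    isNoetherianRing_of_fg (Subalgebra.fg_of_fg_toSubmodule hBfg)
  haveI := hloc
  haveI : Nontrivial B := ⟨0, 1, fun h => zero_ne_one (α := K) (congrArg Subtype.val h)⟩
  have hlocB : IsLocalRing B := by
    refine IsLocalRing.of_isUnit_or_isUnit_one_sub_self fun a => ?_
    have haInt : IsIntegral R (a : K) := hint _ a.2
    rcases IsLocalRing.isUnit_or_isUnit_one_sub_self
        (⟨(a : K), haInt⟩ : integralClosure R K) with h | h
    · obtain ⟨w, hw⟩ := h.exists_right_inv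
      have hwK : (a : K) * (w : K) = 1 := congrArg Subtype.val hw
      have hwB : (w : K) ∈ B := aux_inv_mem B a.2 hwK w.2
      exact Or.inl (IsUnit.of_mul_eq_one (a := a) ⟨(w : K), hwB⟩ (Subtype.ext hwK))
    · obtain ⟨w, hw⟩ := h.exists_right_inv
      have hwK : (1 - (a : K)) * (w : K) = 1 := by
        have h2 := congrArg Subtype.val hw
        push_cast at h2
        exact h2
      have hwB : (w : K) ∈ B := aux_inv_mem B (sub_mem B.one_mem a.2) hwK w.2
      refine Or.inr (IsUnit.of_mul_eq_one ⟨(w : K), hwB⟩ (Subtype.ext ?_))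
      push_cast
      exact hwK
  have hinjB : Function.Injective (algebraMap R B) := by
    intro r s h
    apply hinjK
    have h2 := congrArg (algebraMap B K) h
    rwa [← IsScalarTower.algebraMap_apply, ← IsScalarTower.algebraMap_apply] at h2
  have hdimB : ringKrullDim B = 1 := by
    have hle : ringKrullDim B ≤ 1 := by
      rw [← hdim, ringKrullDim, ringKrullDim]
      refine Order.krullDim_le_of_strictMono
        (fun P : PrimeSpectrum B => ⟨P.asIdeal.comap (algebraMap R B), P.isPrime.comap _⟩) ?_
      intro P Q hPQ
      have hlt : P.asIdeal < Q.asIdeal := hPQ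
      obtain ⟨z, hzQ, hzP⟩ := SetLike.exists_of_lt hlt
      haveI := P.isPrime
      have h2 := Ideal.comap_lt_comap_of_integral_mem_sdiff (R := R) (S := B)
        hlt.le ⟨hzQ, hzP⟩ (Algebra.IsIntegral.isIntegral z)
      exact h2
    have hge : (1 : WithBot (WithTop ℕ)) ≤ ringKrullDim B := by
      have hexists : ∃ p : LTSeries (PrimeSpectrum R), 1 ≤ p.length := by
        by_contra hcon
        push_neg at hcon
        have hsup : (⨆ p : LTSeries (PrimeSpectrum R), (p.length : WithTop ℕ))
            ≤ (0 : WithTop ℕ) :=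
          iSup_le fun p => by simp [Nat.lt_one_iff.mp (hcon p)]
        have hle0 : ringKrullDim R ≤ ((0 : WithTop ℕ) : WithBot (WithTop ℕ)) := by
          rw [ringKrullDim, Order.krullDim_eq_iSup_length]
          exact WithBot.coe_le_coe.mpr hsup
        rw [hdim] at hle0
        exact absurd (WithBot.coe_le_coe.mp hle0 : ((1 : ℕ∞) ≤ 0)) (by norm_num)
      obtain ⟨p, hp1⟩ := hexists
      set a := p.toFun ⟨0, by omega⟩ with ha
      set bb := p.toFun ⟨1, by omega⟩ with hbb
      have hab : a < bb := p.strictMono (by simp [Fin.lt_def])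
      haveI := a.isPrime
      have hab' : a.asIdeal < bb.asIdeal := hab
      have haux : a.asIdeal < maximalIdeal R :=
        lt_of_lt_of_le hab' (IsLocalRing.le_maximalIdeal bb.isPrime.ne_top)
      have hker : (⊥ : Ideal B).comap (algebraMap R B) ≤ a.asIdeal := by
        intro r hr
        have h0 : algebraMap R B r = 0 := hr
        have hr0 : r = 0 := hinjB (by rw [h0, map_zero])
        rw [hr0]; exact zero_mem _
      obtain ⟨Q0, -, hQ0p, hQ0c⟩ :=
        Ideal.exists_ideal_over_prime_of_isIntegral a.asIdeal ⊥ hker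
      haveI := hQ0p
      obtain ⟨Q1, hQ01, hQ1p, hQ1c⟩ :=
        Ideal.exists_ideal_over_prime_of_isIntegral (maximalIdeal R) Q0
          (by rw [hQ0c]; exact haux.le)
      have hQlt : Q0 < Q1 :=
        lt_of_le_of_ne hQ01 (fun h => haux.ne (by rw [← hQ0c, h, hQ1c]))
      let c : LTSeries (PrimeSpectrum B) :=
        (RelSeries.singleton _ (⟨Q0, hQ0p⟩ : PrimeSpectrum B)).snoc ⟨Q1, hQ1p⟩
          (by exact hQlt)
      have hlen := Order.LTSeries.length_le_krullDim c
      have hclen : c.length = 1 := by rfl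
      rw [ringKrullDim]
      rw [hclen, Nat.cast_one] at hlen
      exact hlen
    exact le_antisymm hle hge
  have hxB : algebraMap R K x ∈ B := B.algebraMap_mem x
  refine ⟨hNoeth, ⟨hlocB, hdimB, ⟨algebraMap R K x, hxB⟩, ?_, ?_⟩, ?_⟩
  · rw [IsLocalRing.mem_maximalIdeal]
    intro hun
    obtain ⟨w, hw⟩ := hun.exists_right_inv
    have hwK : algebraMap R K x * (w : K) = 1 := congrArg Subtype.val hw
    have hwbot : (w : K) ∈ (⊥ : Subalgebra R K) :=
      aux_inv_mem ⊥ (Algebra.mem_bot.mpr ⟨x, rfl⟩) hwK (hint _ w.2)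
    obtain ⟨r, hr⟩ := Algebra.mem_bot.mp hwbot
    have hxr : x * r = 1 := by
      apply hinjK
      rw [map_mul, map_one, hr]
      exact hwK
    exact mem_nonunits_iff.mp ((IsLocalRing.mem_maximalIdeal x).mp hxm)
      (IsUnit.of_mul_eq_one (a := x) r hxr)
  · rw [mem_nonZeroDivisors_iff_right]
    intro z hz
    have hzK : (z : K) * algebraMap R K x = 0 := by
      have h2 := congrArg Subtype.val hz
      push_cast at h2
      exact h2
    have hxu : IsUnit (algebraMap R K x) := ⟨u, hu⟩
    exact Subtype.ext (hxu.mul_left_eq_zero.mp hzK)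
  · ext z
    simp only [SetLike.mem_coe]
    constructor
    · exact fun h => isIntegral_trans (R := R) (A := B) z h
    · exact fun h => IsIntegral.tower_top (A := B) h
end

section
/- Let (R, m) be a one-dimensional far-flung Gorenstein local ring satisfying conditions (a)-(d), not a DVR, with a ∈ m a principal reduction of m. Let B = m : m. Then B : B̄ = (1/a)(R : R̄) and tr_B(ω_B) = (1/a)·tr_R(ω_R); in particular, B is also a far-flung Gorenstein ring. -/
set_option synthInstance.maxHeartbeats 400000

open IsLocalRing Pointwise

set_option maxHeartbeats 2000000

namespace FFGAux

variable {R : Type*} {A : Type*} [CommRing R] [CommRing A] [Algebra R A]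

theorem div_mul_le (I X : Submodule R A) : (I / X) * X ≤ I := by
  rw [Submodule.mul_le]
  intro x hx y hy
  exact Submodule.mem_div_iff_forall_mul_mem.mp hx y hy

theorem div_div (I X Y : Submodule R A) : (I / X) / Y = I / (X * Y) := by
  apply le_antisymm
  · rw [Submodule.le_div_iff_mul_le]
    calc ((I / X) / Y) * (X * Y) = (((I / X) / Y) * Y) * X := by ring
      _ ≤ (I / X) * X := mul_le_mul' (div_mul_le _ _) le_rfl
      _ ≤ I := div_mul_le _ _
  · intro z hz
    rw [Submodule.mem_div_iff_forall_mul_mem]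
    intro y hy
    rw [Submodule.mem_div_iff_forall_mul_mem]
    intro x hx
    have : z * y * x = z * (x * y) := by ring
    rw [this]
    exact Submodule.mem_div_iff_forall_mul_mem.mp hz _ (Submodule.mul_mem_mul hx hy)

theorem unit_div_cancel {u : A} (hu : IsUnit u) (Y X : Submodule R A) :
    Submodule.span R {u} * (Y / (Submodule.span R {u} * X)) = Y / X := by
  apply le_antisymm
  · rw [Submodule.mul_le]
    intro s hs d hd
    obtain ⟨r, rfl⟩ := Submodule.mem_span_singleton.mp hs
    rw [Submodule.mem_div_iff_forall_mul_mem]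
    intro x hx
    have h1 : u * x ∈ Submodule.span R {u} * X :=
      Submodule.mem_span_singleton_mul.mpr ⟨x, hx, rfl⟩
    have h2 : d * (u * x) ∈ Y := Submodule.mem_div_iff_forall_mul_mem.mp hd _ h1
    have : r • u * d * x = r • (d * (u * x)) := by
      rw [smul_mul_assoc, smul_mul_assoc]
      exact congrArg (r • ·) (by ring)
    rw [this]
    exact Submodule.smul_mem _ _ h2
  · intro z hz
    have hvz : (↑hu.unit⁻¹ : A) * z ∈ Y / (Submodule.span R {u} * X) := by
      rw [Submodule.mem_div_iff_forall_mul_mem]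
      intro w hw
      obtain ⟨x, hx, rfl⟩ := Submodule.mem_span_singleton_mul.mp hw
      have : (↑hu.unit⁻¹ : A) * z * (u * x) = (↑hu.unit⁻¹ * u) * (z * x) := by ring
      rw [this, IsUnit.val_inv_mul, one_mul]
      exact Submodule.mem_div_iff_forall_mul_mem.mp hz x hx
    have hz' : z = u * ((↑hu.unit⁻¹ : A) * z) := by
      rw [← mul_assoc, IsUnit.mul_val_inv, one_mul]
    rw [hz']
    exact Submodule.mul_mem_mul (Submodule.mem_span_singleton_self u) hvz

theorem unit_mul_cancel {u : A} (hu : IsUnit u) {X Y : Submodule R A}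
    (h : Submodule.span R {u} * X = Submodule.span R {u} * Y) : X = Y := by
  have key : ∀ Z : Submodule R A,
      Submodule.span R {(↑hu.unit⁻¹ : A)} * (Submodule.span R {u} * Z) = Z := by
    intro Z
    rw [← mul_assoc, Submodule.span_mul_span, Set.singleton_mul_singleton,
      IsUnit.val_inv_mul, ← Submodule.one_eq_span, one_mul]
  rw [← key X, ← key Y, h]

theorem isIntegral_of_mul_stab [IsNoetherianRing R] (N : Submodule R A) (hfg : N.FG)
    {u : A} (hu : IsUnit u) (huN : u ∈ N) (y : A) (hy : ∀ w ∈ N, y * w ∈ N) :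
    IsIntegral R y := by
  set v : A := (↑hu.unit⁻¹ : A) with hv
  have hvu : v * u = 1 := IsUnit.val_inv_mul hu
  set N' : Submodule R A := Submodule.span R {v} * N with hN'def
  have hN' : N'.FG := (Submodule.fg_span_singleton v).mul hfg
  have hpow : ∀ k : ℕ, y ^ k ∈ N' := by
    intro k
    have h1 : y ^ k * u ∈ N := by
      induction k with
      | zero => simpa using huN
      | succ k ih =>
        have : y ^ (k + 1) * u = y * (y ^ k * u) := by ring
        rw [this]
        exact hy _ ih
    refine Submodule.mem_span_singleton_mul.mpr ⟨y ^ k * u, h1, ?_⟩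
    calc v * (y ^ k * u) = y ^ k * (v * u) := by ring
      _ = y ^ k := by rw [hvu, mul_one]
  have hle : Subalgebra.toSubmodule (Algebra.adjoin R ({y} : Set A)) ≤ N' := by
    rw [Algebra.adjoin_eq_span, Submodule.span_le]
    intro z hz
    obtain ⟨k, rfl⟩ := Submonoid.mem_closure_singleton.mp hz
    exact hpow k
  haveI : IsNoetherian R N' := isNoetherian_of_fg_of_noetherian _ hN'
  have hfg2 : (Subalgebra.toSubmodule (Algebra.adjoin R ({y} : Set A))).FG := by
    have h1 : (Submodule.comap N'.subtype
        (Subalgebra.toSubmodule (Algebra.adjoin R ({y} : Set A)))).FG :=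
      IsNoetherian.noetherian _
    have h2 := h1.map N'.subtype
    rwa [Submodule.map_comap_eq, Submodule.range_subtype, inf_eq_right.mpr hle] at h2
  exact IsIntegral.of_mem_of_fg _ hfg2 _ (Algebra.self_mem_adjoin_singleton R y)

end FFGAux

/-- Let `(R, 𝔪)` be a one-dimensional far-flung Gorenstein local ring
satisfying conditions (a)-(d), not a DVR, with `a ∈ 𝔪` a principal reduction of `𝔪`.
Let `B = 𝔪 : 𝔪` (so `B̄ = R̄` and `ω_B ≅ C : B = 𝔪C`). Then
`B : B̄ = (1/a)(R : R̄)` and `tr_B(ω_B) = (1/a)·tr_R(ω_R)` (stated after multiplying by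
`a`); in particular `B` is also far-flung Gorenstein: `tr_B(ω_B) = B : B̄`. -/
theorem endomorphism_algebra_farFlungGorenstein
    (R : Type*) [CommRing R] [IsNoetherianRing R] [IsLocalRing R]
    (hdim : ringKrullDim R = 1)
    (hCM : ∃ x ∈ maximalIdeal R, x ∈ nonZeroDivisors R)
    (hnotDVR : ¬ (maximalIdeal R).IsPrincipal)
    (C : Submodule R (FractionRing R))
    (hcan : IsCanonicalIdeal R C)
    (hRC : (1 : Submodule R (FractionRing R)) ≤ C)
    (hCRbar : C ≤ Subalgebra.toSubmodule (integralClosure R (FractionRing R)))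
    (hfin : (Subalgebra.toSubmodule (integralClosure R (FractionRing R))).FG)
    (hloc : IsLocalRing (integralClosure R (FractionRing R)))
    (a : R) (ha : a ∈ maximalIdeal R) (hanzd : a ∈ nonZeroDivisors R)
    (hred : ∃ n : ℕ, maximalIdeal R ^ (n + 1) = Ideal.span {a} * maximalIdeal R ^ n)
    (hFFG : ((1 : Submodule R (FractionRing R)) / C) * C =
      (1 : Submodule R (FractionRing R)) /
        Subalgebra.toSubmodule (integralClosure R (FractionRing R))) :
    let Rbar : Submodule R (FractionRing R) :=
      Subalgebra.toSubmodule (integralClosure R (FractionRing R))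
    let mK : Submodule R (FractionRing R) :=
      Submodule.map (Algebra.linearMap R (FractionRing R)) (maximalIdeal R)
    let B : Submodule R (FractionRing R) := mK / mK
    let aK : Submodule R (FractionRing R) :=
      Submodule.span R {algebraMap R (FractionRing R) a}
    -- (i) `B : B̄ = (1/a)(R : R̄)`, i.e. `a·(B : R̄) = R : R̄`
    aK * (B / Rbar) = (1 : Submodule R (FractionRing R)) / Rbar ∧
    -- (ii) `tr_B(ω_B) = (1/a)·tr_R(ω_R)`, i.e. `a·(B : 𝔪C)·(𝔪C) = (R : C)·C`
    aK * ((B / (mK * C)) * (mK * C)) = ((1 : Submodule R (FractionRing R)) / C) * C ∧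
    -- `B` is far-flung Gorenstein: `tr_B(ω_B) = B : B̄`
    (B / (mK * C)) * (mK * C) = B / Rbar := by
  set K := FractionRing R with hKdef
  set φ := algebraMap R K with hφdef
  have inj : Function.Injective φ :=
    IsLocalization.injective K (le_refl (nonZeroDivisors R))
  set Rbar : Submodule R K := Subalgebra.toSubmodule (integralClosure R K) with hRbardef
  set mK : Submodule R K := Submodule.map (Algebra.linearMap R K) (maximalIdeal R) with hmKdef
  set aK : Submodule R K := Submodule.span R {φ a} with haKdef
  intro _ _ B _
  -- basic membership facts
  have hmemK : ∀ x : R, ∀ I : Ideal R, x ∈ I →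
      φ x ∈ Submodule.map (Algebra.linearMap R K) I := fun x I hx => ⟨x, hx, rfl⟩
  have mK_le_one : mK ≤ 1 := by
    rintro _ ⟨t, ht, rfl⟩
    exact Submodule.mem_one.mpr ⟨t, rfl⟩
  have one_mem_one : (1 : K) ∈ (1 : Submodule R K) := Submodule.mem_one.mpr ⟨1, map_one φ⟩
  have hRbmul : ∀ x ∈ Rbar, ∀ y ∈ Rbar, x * y ∈ Rbar := by
    intro x hx y hy
    have hx' : x ∈ integralClosure R K := hx
    have hy' : y ∈ integralClosure R K := hy
    have : x * y ∈ integralClosure R K := mul_mem hx' hy'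
    exact this
  have Rb_mul_le : Rbar * Rbar ≤ Rbar := by
    rw [Submodule.mul_le]; exact hRbmul
  have one_le_Rbar : (1 : Submodule R K) ≤ Rbar := le_trans hRC hCRbar
  have div1 : ∀ I : Submodule R K, I / 1 = I := by
    intro I
    apply le_antisymm
    · intro x hx
      have := Submodule.mem_div_iff_forall_mul_mem.mp hx 1 one_mem_one
      simpa using this
    · rw [Submodule.le_div_iff_mul_le, mul_one]
  have one_fg : (1 : Submodule R K).FG := by
    rw [Submodule.one_eq_span]; exact Submodule.fg_span_singleton _
  have CC1 : C / C = 1 := by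
    have h := hcan.2 1 one_fg ⟨1, one_mem _, by simpa using one_mem_one⟩
    rwa [div1 C] at h
  have haU : IsUnit (φ a) := IsLocalization.map_units K ⟨a, hanzd⟩
  -- the key integrality fact: (φ a)⁻¹ * φ x is integral for x ∈ 𝔪
  have hint : ∀ x ∈ maximalIdeal R, (↑haU.unit⁻¹ : K) * φ x ∈ Rbar := by
    obtain ⟨n, hn⟩ := hred
    intro x hx
    set N : Submodule R K := Submodule.map (Algebra.linearMap R K) (maximalIdeal R ^ n)
      with hNdef
    have hNfg : N.FG := (IsNoetherian.noetherian _).map _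
    have huN : φ (a ^ n) ∈ N := hmemK _ _ (Ideal.pow_mem_pow ha n)
    have huU : IsUnit (φ (a ^ n)) := by rw [map_pow]; exact haU.pow n
    rw [hRbardef, Subalgebra.mem_toSubmodule]
    apply FFGAux.isIntegral_of_mul_stab N hNfg huU huN
    rintro _ ⟨t, ht, rfl⟩
    have hxt : x * t ∈ Ideal.span {a} * maximalIdeal R ^ n := by
      rw [← hn, pow_succ, mul_comm x t]
      exact Ideal.mul_mem_mul ht hx
    obtain ⟨s, hs, hsa⟩ := Ideal.mem_span_singleton_mul.mp hxt
    have heq : (↑haU.unit⁻¹ : K) * φ x * (Algebra.linearMap R K t) = φ s := by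
      show (↑haU.unit⁻¹ : K) * φ x * φ t = φ s
      rw [mul_assoc, ← map_mul, ← hsa, map_mul]
      rw [← mul_assoc, mul_comm (↑haU.unit⁻¹ : K) (φ a), IsUnit.mul_val_inv, one_mul]
    rw [heq]
    exact hmemK _ _ hs
  have mle : mK ≤ aK * Rbar := by
    rintro _ ⟨x, hx, rfl⟩
    refine Submodule.mem_span_singleton_mul.mpr ⟨(↑haU.unit⁻¹ : K) * φ x, hint x hx, ?_⟩
    show φ a * ((↑haU.unit⁻¹ : K) * φ x) = Algebra.linearMap R K x
    rw [← mul_assoc, IsUnit.mul_val_inv, one_mul]; rfl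
  have aK_le_mK : aK ≤ mK := by
    rw [haKdef, Submodule.span_le, Set.singleton_subset_iff]
    exact hmemK _ _ ha
  have hmRb : mK * Rbar = aK * Rbar := by
    apply le_antisymm
    · calc mK * Rbar ≤ (aK * Rbar) * Rbar := mul_le_mul' mle le_rfl
        _ = aK * (Rbar * Rbar) := mul_assoc _ _ _
        _ ≤ aK * Rbar := mul_le_mul' le_rfl Rb_mul_le
    · exact mul_le_mul' aK_le_mK le_rfl
  -- B = 1 / mK
  have B1 : B = (1 : Submodule R K) / mK := by
    apply le_antisymm
    · intro x hx
      rw [Submodule.mem_div_iff_forall_mul_mem]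
      intro y hy
      exact mK_le_one (Submodule.mem_div_iff_forall_mul_mem.mp hx y hy)
    · by_cases hc : ((1 : Submodule R K) / mK) * mK ≤ mK
      · intro x hx
        rw [Submodule.mem_div_iff_forall_mul_mem]
        intro y hy
        exact hc (Submodule.mul_mem_mul hx hy)
      · exfalso
        classical
        apply hnotDVR
        obtain ⟨w, hw, hwm⟩ := SetLike.not_le_iff_exists.mp hc
        have hle1 : ((1 : Submodule R K) / mK) * mK ≤ 1 := by
          rw [Submodule.mul_le]
          intro s hs t ht
          exact Submodule.mem_div_iff_forall_mul_mem.mp hs t ht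
        obtain ⟨v, hv⟩ := Submodule.mem_one.mp (hle1 hw)
        have hvU : IsUnit v := by
          by_contra h
          exact hwm ⟨v, (mem_maximalIdeal v).mpr h, hv⟩
        have h1mem : (1 : K) ∈ ((1 : Submodule R K) / mK) * mK := by
          have hsm := Submodule.smul_mem (((1 : Submodule R K) / mK) * mK)
            (↑hvU.unit⁻¹ : R) hw
          have : (↑hvU.unit⁻¹ : R) • w = 1 := by
            rw [← hv, Algebra.smul_def, ← map_mul, IsUnit.val_inv_mul, map_one]
          rwa [this] at hsm
        obtain ⟨T, T', hT, hT', hspan⟩ := Submodule.mem_span_mul_finite_of_mem_mul h1mem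
        rw [← Finset.coe_mul] at hspan
        obtain ⟨f, -, hf⟩ := Submodule.mem_span_finset.mp hspan
        have hmem1 : ∀ p ∈ T * T', ∃ rp : R, φ rp = p := by
          intro p hp
          obtain ⟨t, ht, t', ht', rfl⟩ := Finset.mem_mul.mp hp
          exact Submodule.mem_one.mp
            (Submodule.mem_div_iff_forall_mul_mem.mp (hT ht) t' (hT' ht'))
        choose! g hg using hmem1
        have hsum' : (∑ p ∈ T * T', f p * g p) = 1 := by
          apply inj
          rw [map_one, map_sum, ← hf]
          apply Finset.sum_congr rfl
          intro p hp
          rw [map_mul, hg p hp, ← Algebra.smul_def]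
        have hexu : ∃ p ∈ T * T', IsUnit (f p * g p) := by
          by_contra h
          push_neg at h
          have h1 : (1 : R) ∈ maximalIdeal R := by
            rw [← hsum']
            exact Ideal.sum_mem _ fun p hp => (mem_maximalIdeal _).mpr (h p hp)
          exact (mem_maximalIdeal 1).mp h1 isUnit_one
        obtain ⟨p0, hp0, hu0⟩ := hexu
        obtain ⟨t, htT, t', htT', hptt⟩ := Finset.mem_mul.mp hp0
        have htX : t ∈ (1 : Submodule R K) / mK := hT htT
        obtain ⟨x0, hx0m, hx0⟩ := hT' htT'
        refine ⟨⟨x0, ?_⟩⟩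
        apply le_antisymm
        · intro z hz
          have h1 : t * φ z ∈ (1 : Submodule R K) :=
            Submodule.mem_div_iff_forall_mul_mem.mp htX (φ z) (hmemK _ _ hz)
          obtain ⟨s, hs⟩ := Submodule.mem_one.mp h1
          have heq : f p0 * g p0 * z = f p0 * (s * x0) := by
            apply inj
            have e1 : φ (g p0) = t * t' := by rw [hg p0 hp0, hptt]
            have e2 : φ x0 = t' := hx0
            calc φ (f p0 * g p0 * z) = φ (f p0) * φ (g p0) * φ z := by
                  rw [map_mul, map_mul]
              _ = φ (f p0) * (t * φ z) * t' := by rw [e1]; ring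
              _ = φ (f p0) * φ s * φ x0 := by rw [hs, e2]
              _ = φ (f p0 * (s * x0)) := by rw [map_mul, map_mul]; ring
          rcases hu0 with ⟨u, hu⟩
          have hz' : z = ↑u⁻¹ * (f p0 * (s * x0)) := by
            calc z = ↑u⁻¹ * (↑u * z) := by rw [← mul_assoc, u.inv_mul, one_mul]
              _ = ↑u⁻¹ * (f p0 * (s * x0)) := by rw [hu, heq]
          exact Ideal.mem_span_singleton'.mpr ⟨↑u⁻¹ * (f p0 * s), by rw [hz']; ring⟩
        · rw [Submodule.span_le, Set.singleton_subset_iff]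
          exact hx0m
  -- conductor lemmas
  have RbCond : Rbar * ((1 : Submodule R K) / Rbar) ≤ (1 : Submodule R K) / Rbar := by
    rw [Submodule.mul_le]
    intro s hs x hx
    rw [Submodule.mem_div_iff_forall_mul_mem]
    intro w hw
    have : s * x * w = x * (s * w) := by ring
    rw [this]
    exact Submodule.mem_div_iff_forall_mul_mem.mp hx _ (hRbmul s hs w hw)
  have m_cond : mK * ((1 : Submodule R K) / Rbar) = aK * ((1 : Submodule R K) / Rbar) := by
    apply le_antisymm
    · calc mK * ((1 : Submodule R K) / Rbar)
          ≤ (aK * Rbar) * ((1 : Submodule R K) / Rbar) := mul_le_mul' mle le_rfl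
        _ = aK * (Rbar * ((1 : Submodule R K) / Rbar)) := mul_assoc _ _ _
        _ ≤ aK * ((1 : Submodule R K) / Rbar) := mul_le_mul' le_rfl RbCond
    · exact mul_le_mul' aK_le_mK le_rfl
  have oneC_le_one : (1 : Submodule R K) / C ≤ 1 := by
    intro x hx
    have := Submodule.mem_div_iff_forall_mul_mem.mp hx 1 (hRC one_mem_one)
    simpa using this
  have CRb : C / Rbar = (1 : Submodule R K) / C := by
    apply le_antisymm
    · have hCC : C * C ≤ Rbar := by
        rw [Submodule.mul_le]
        intro x hx y hy
        exact hRbmul x (hCRbar hx) y (hCRbar hy)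
      have h1 : C / Rbar ≤ C / (C * C) := by
        intro z hz
        rw [Submodule.mem_div_iff_forall_mul_mem]
        intro w hw
        exact Submodule.mem_div_iff_forall_mul_mem.mp hz w (hCC hw)
      rwa [← FFGAux.div_div, CC1] at h1
    · intro x hx
      rw [Submodule.mem_div_iff_forall_mul_mem]
      intro u hu
      have hxu : x * u ∈ (1 : Submodule R K) / C := by
        rw [Submodule.mem_div_iff_forall_mul_mem]
        intro c hc
        have h1 : x * c ∈ ((1 : Submodule R K) / C) * C := Submodule.mul_mem_mul hx hc
        rw [hFFG] at h1
        have h2 := Submodule.mem_div_iff_forall_mul_mem.mp h1 u hu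
        have : x * u * c = x * c * u := by ring
        rwa [this]
      exact hRC (oneC_le_one hxu)
  have C2 : C * C = Rbar := by
    have h1 := hcan.2 (C * C) (hcan.1.mul hcan.1)
      ⟨1, one_mem _, by simpa using Submodule.mul_mem_mul (hRC one_mem_one) (hRC one_mem_one)⟩
    have h2 := hcan.2 Rbar hfin ⟨1, one_mem _, by simpa using one_le_Rbar one_mem_one⟩
    have h3 : C / (C * C) = C / Rbar := by
      rw [← FFGAux.div_div, CC1, CRb]
    calc C * C = C / (C / (C * C)) := h1.symm
      _ = C / (C / Rbar) := by rw [h3]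
      _ = Rbar := h2
  -- goal (i)
  have gi : aK * (B / Rbar) = (1 : Submodule R K) / Rbar := by
    rw [B1, FFGAux.div_div, hmRb]
    exact FFGAux.unit_div_cancel haU 1 Rbar
  -- goal (iii) setup
  have hBdiv : B / (mK * C) = C / (aK * (aK * Rbar)) := by
    rw [B1, FFGAux.div_div, ← CC1, FFGAux.div_div]
    congr 1
    calc C * (mK * (mK * C)) = (mK * mK) * (C * C) := by ring
      _ = mK * (mK * Rbar) := by rw [C2]; ring
      _ = mK * (aK * Rbar) := by rw [hmRb]
      _ = aK * (mK * Rbar) := by ring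
      _ = aK * (aK * Rbar) := by rw [hmRb]
  have hT2 : aK * (aK * ((B / (mK * C)) * (mK * C))) = aK * ((1 : Submodule R K) / Rbar) := by
    calc aK * (aK * ((B / (mK * C)) * (mK * C)))
        = (aK * (aK * (B / (mK * C)))) * (mK * C) := by ring
      _ = (aK * (C / (aK * Rbar))) * (mK * C) := by
          rw [hBdiv, FFGAux.unit_div_cancel haU C (aK * Rbar)]
      _ = (C / Rbar) * (mK * C) := by rw [FFGAux.unit_div_cancel haU C Rbar]
      _ = (((1 : Submodule R K) / C) * C) * mK := by rw [CRb]; ring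
      _ = ((1 : Submodule R K) / Rbar) * mK := by rw [hFFG]
      _ = aK * ((1 : Submodule R K) / Rbar) := by rw [mul_comm]; exact m_cond
  have giii : (B / (mK * C)) * (mK * C) = B / Rbar := by
    apply FFGAux.unit_mul_cancel haU
    apply FFGAux.unit_mul_cancel haU
    show aK * (aK * ((B / (mK * C)) * (mK * C))) = aK * (aK * (B / Rbar))
    rw [hT2, gi]
  have gii : aK * ((B / (mK * C)) * (mK * C)) = ((1 : Submodule R K) / C) * C := by
    rw [giii, gi, hFFG]
  exact ⟨gi, gii, giii⟩
end

section
/- Let R be a one-dimensional far-flung Gorenstein local ring satisfying conditions (a)-(c). Then Hom_R(ω_R, R) ≅ R̄ as an R-module. -/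
set_option synthInstance.maxHeartbeats 400000
set_option maxHeartbeats 1600000

open IsLocalRing

section HomEquiv

variable {R : Type*} [CommRing R]

/-- `R ≃ₗ (1 : Submodule R (FractionRing R))`. -/
noncomputable def FFG.algOneEquiv (R : Type*) [CommRing R] :
    R ≃ₗ[R] ((1 : Submodule R (FractionRing R)) : Submodule R (FractionRing R)) :=
  (LinearEquiv.ofInjective (Algebra.linearMap R (FractionRing R))
      (IsFractionRing.injective R (FractionRing R))).trans
    (LinearEquiv.ofEq _ _ (Submodule.one_eq_range (R := R) (A := FractionRing R)).symm)

@[simp] theorem FFG.algOneEquiv_apply (r : R) :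
    ((FFG.algOneEquiv R r : (1 : Submodule R (FractionRing R))) : FractionRing R)
      = algebraMap R (FractionRing R) r := rfl

theorem FFG.algOneEquiv_symm_coe (y : (1 : Submodule R (FractionRing R))) :
    algebraMap R (FractionRing R) ((FFG.algOneEquiv R).symm y) = (y : FractionRing R) := by
  conv_rhs => rw [← (FFG.algOneEquiv R).apply_symm_apply y]
  rfl

theorem FFG.key (C : Submodule R (FractionRing R)) (h1 : (1 : FractionRing R) ∈ C)
    (f : C →ₗ[R] R) (c : C) :
    algebraMap R (FractionRing R) (f c) =
      algebraMap R (FractionRing R) (f ⟨1, h1⟩) * (c : FractionRing R) := by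
  obtain ⟨⟨a, s⟩, hs⟩ := IsLocalization.surj (nonZeroDivisors R) (c : FractionRing R)
  have h2 : (s : R) • c = a • (⟨1, h1⟩ : C) := by
    apply Subtype.ext
    show (s : R) • (c : FractionRing R) = a • (1 : FractionRing R)
    rw [Algebra.smul_def, Algebra.smul_def, mul_one, mul_comm]
    exact hs
  have h3 : (s : R) * f c = a * f ⟨1, h1⟩ := by
    have := congrArg f h2
    rwa [map_smul, map_smul, smul_eq_mul, smul_eq_mul] at this
  have h4 := congrArg (algebraMap R (FractionRing R)) h3
  rw [map_mul, map_mul] at h4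
  have hu : IsUnit (algebraMap R (FractionRing R) (s : R)) :=
    IsLocalization.map_units _ s
  apply hu.mul_left_cancel
  rw [h4, ← hs]
  ring

/-- For a submodule `C` of the total fraction ring containing `1`,
`Hom(C, R)` is isomorphic to `1/C`. -/
noncomputable def FFG.homEquivOneDiv (C : Submodule R (FractionRing R))
    (h1 : (1 : FractionRing R) ∈ C) :
    (C →ₗ[R] R) ≃ₗ[R]
      (((1 : Submodule R (FractionRing R)) / C :
        Submodule R (FractionRing R)) : Submodule R (FractionRing R)) := by
  have memdiv : ∀ f : C →ₗ[R] R,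
      algebraMap R (FractionRing R) (f ⟨1, h1⟩)
        ∈ (1 : Submodule R (FractionRing R)) / C := by
    intro f
    refine Submodule.mem_div_iff_forall_mul_mem.mpr fun y hy => ?_
    rw [← FFG.key C h1 f ⟨y, hy⟩]
    exact Submodule.mem_one.mpr ⟨_, rfl⟩
  refine
    { toFun := fun f => ⟨algebraMap R (FractionRing R) (f ⟨1, h1⟩), memdiv f⟩
      map_add' := fun f g => Subtype.ext ?_
      map_smul' := fun r f => Subtype.ext ?_
      invFun := fun x =>
        (FFG.algOneEquiv R).symm.toLinearMap ∘ₗ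
          LinearMap.codRestrict _
            ((LinearMap.mul R (FractionRing R) (x : FractionRing R)) ∘ₗ C.subtype)
            (fun c => Submodule.mem_div_iff_forall_mul_mem.mp x.2 _ c.2)
      left_inv := ?_
      right_inv := ?_ }
  · simp
  · simp [Algebra.smul_def]
  · intro f
    apply LinearMap.ext
    intro c
    apply IsFractionRing.injective R (FractionRing R)
    rw [FFG.key C h1 f c]
    simp only [LinearMap.coe_comp, Function.comp_apply, LinearEquiv.coe_coe]
    rw [FFG.algOneEquiv_symm_coe]
    rfl
  · intro x
    apply Subtype.ext
    show algebraMap R (FractionRing R) _ = (x : FractionRing R)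
    simp only [LinearMap.coe_comp, Function.comp_apply, LinearEquiv.coe_coe]
    rw [FFG.algOneEquiv_symm_coe]
    show (x : FractionRing R) * ((1 : FractionRing R)) = _
    rw [mul_one]

end HomEquiv

theorem FFG.isField (R : Type*) [CommRing R] [IsNoetherianRing R] [IsLocalRing R]
    (hCM : ∃ x ∈ maximalIdeal R, x ∈ nonZeroDivisors R)
    (hfin : (Subalgebra.toSubmodule (integralClosure R (FractionRing R))).FG)
    (hloc : IsLocalRing (integralClosure R (FractionRing R))) :
    IsField (FractionRing R) := by
  haveI := hloc
  have hinj : Function.Injective (algebraMap R (FractionRing R)) :=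
    IsFractionRing.injective R (FractionRing R)
  haveI : Nontrivial (FractionRing R) :=
    ⟨1, 0, fun h => one_ne_zero (α := R) (hinj (by simpa using h))⟩
  haveI hQnoeth : IsNoetherianRing (FractionRing R) :=
    IsLocalization.isNoetherianRing (nonZeroDivisors R) (FractionRing R) ‹_›
  set Q := FractionRing R with hQ
  set M : Submodule R Q := Subalgebra.toSubmodule (integralClosure R Q) with hM
  -- Step 1 : Q is reduced
  have hred : ∀ q : Q, q * q = 0 → q = 0 := by
    set N : Submodule R Q := Submodule.restrictScalars R (nilradical Q : Ideal Q) with hN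
    have hNM : N ≤ M := by
      intro x hx
      obtain ⟨n, hn⟩ := (hx : x ∈ nilradical Q)
      have hxint : IsIntegral R x := ⟨Polynomial.X ^ (n + 1), Polynomial.monic_X_pow _, by
        rw [Polynomial.eval₂_X_pow, pow_succ, hn, zero_mul]⟩
      exact (Subalgebra.mem_toSubmodule _).mpr hxint
    have hNfg : N.FG := by
      haveI : IsNoetherian R M := isNoetherian_of_fg_of_noetherian _ hfin
      have h1 : (Submodule.comap M.subtype N).FG := IsNoetherian.noetherian _
      have h2 := h1.map M.subtype
      rwa [Submodule.map_comap_eq_self (by rwa [Submodule.range_subtype])] at h2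
    have hbot : N = ⊥ := by
      refine Submodule.eq_bot_of_le_smul_of_le_jacobson_bot (maximalIdeal R) N hNfg ?_ ?_
      · intro v hv
        obtain ⟨x, hxm, hxnzd⟩ := hCM
        obtain ⟨u, hu'⟩ : IsUnit (algebraMap R Q x) := IsLocalization.map_units Q ⟨x, hxnzd⟩
        have hv' : ((↑u⁻¹ : Q) * v) ∈ N := Ideal.mul_mem_left _ _ hv
        have hveq : v = x • ((↑u⁻¹ : Q) * v) := by
          rw [Algebra.smul_def, ← hu', ← mul_assoc, Units.mul_inv, one_mul]
        rw [hveq]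
        exact Submodule.smul_mem_smul hxm hv'
      · exact (IsLocalRing.jacobson_eq_maximalIdeal ⊥ bot_ne_top).ge
    intro q hq
    have hqN : q ∈ N := (⟨2, by rwa [pow_two]⟩ : q ∈ nilradical Q)
    rw [hbot] at hqN
    simpa using hqN
  -- Step 2 : nonzerodivisors of Q are units
  have hnzd : ∀ q : Q, q ∈ nonZeroDivisors Q → IsUnit q := by
    intro q hq
    obtain ⟨⟨a, s⟩, hs⟩ := IsLocalization.surj (nonZeroDivisors R) q
    have ha : algebraMap R Q a ∈ nonZeroDivisors Q := by
      rw [← hs]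
      exact Submonoid.mul_mem _ hq (IsLocalization.map_units Q s).mem_nonZeroDivisors
    have ha' : a ∈ nonZeroDivisors R := by
      rw [mem_nonZeroDivisors_iff_right]
      intro y hy
      have h0 : algebraMap R Q y * algebraMap R Q a = 0 := by
        rw [← map_mul, hy, map_zero]
      have := mem_nonZeroDivisors_iff_right.mp ha _ h0
      exact hinj (by rwa [map_zero])
    have hU : IsUnit (algebraMap R Q a) := IsLocalization.map_units Q ⟨a, ha'⟩
    rw [← hs] at hU
    exact isUnit_of_mul_isUnit_left hU
  -- Step 3 : idempotents of Q are trivial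
  have hidem : ∀ e : Q, e * e = e → e = 0 ∨ e = 1 := by
    intro e he
    have hint : e ∈ integralClosure R Q := by
      refine ⟨Polynomial.X ^ 2 - Polynomial.X, Polynomial.monic_X_pow_sub (by
        simpa using Polynomial.degree_X_le), ?_⟩
      simp only [Polynomial.eval₂_sub, Polynomial.eval₂_X_pow, Polynomial.eval₂_X]
      rw [pow_two, he, sub_self]
    set eb : integralClosure R Q := ⟨e, hint⟩ with heb
    have hebidem : eb * eb = eb := Subtype.ext (by simpa using he)
    rcases IsLocalRing.isUnit_or_isUnit_one_sub_self eb with h | h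
    · right
      have : eb = 1 := by
        apply h.mul_left_cancel
        rw [hebidem, mul_one]
      simpa [heb] using congrArg (Subtype.val) this
    · left
      have h0 : (1 - eb) * eb = (1 - eb) * 0 := by
        rw [sub_mul, one_mul, hebidem, sub_self, mul_zero]
      have : eb = 0 := h.mul_left_cancel h0
      simpa [heb] using congrArg (Subtype.val) this
  -- Step 4 : every element of Q is zero or a unit
  have main : ∀ a : Q, a = 0 ∨ IsUnit a := by
    intro a
    classical
    let D : Q → Ideal Q := fun c =>
      LinearMap.ker (LinearMap.lsmul Q Q a) ⊓ LinearMap.ker (LinearMap.lsmul Q Q c)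
    have hmemD : ∀ c x, x ∈ D c ↔ a * x = 0 ∧ c * x = 0 := by
      intro c x
      simp [D, LinearMap.mem_ker, smul_eq_mul, Submodule.mem_inf]
    have hKmem : ∀ c, c ∈ LinearMap.ker (LinearMap.lsmul Q Q a) ↔ a * c = 0 := by
      intro c; simp [LinearMap.mem_ker, smul_eq_mul]
    obtain ⟨J, ⟨c₀, hc₀K, rfl⟩, hmax⟩ :=
      (set_has_maximal_iff_noetherian.mpr (inferInstanceAs (IsNoetherian Q Q)))
        {J : Ideal Q | ∃ c, a * c = 0 ∧ J = (D c).annihilator}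
        ⟨(D 0).annihilator, 0, mul_zero a, rfl⟩
    have hD0 : D c₀ = ⊥ := by
      refine (Submodule.eq_bot_iff _).mpr fun d hd => by_contra fun hdne => ?_
      obtain ⟨had, hc₀d⟩ := (hmemD c₀ d).mp hd
      set c' : Q := c₀ + d with hc'
      have hc'K : a * c' = 0 := by rw [hc', mul_add, hc₀K, had, add_zero]
      have hDle : ∀ x ∈ D c', x ∈ D c₀ ∧ d * x = 0 := by
        intro x hx
        obtain ⟨hax, hcx⟩ := (hmemD c' x).mp hx
        rw [hc'] at hcx
        have hc₀x : c₀ * x = 0 := by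
          apply hred
          have h1 : c₀ * c₀ * x = 0 := by
            have h2 : c₀ * ((c₀ + d) * x) = 0 := by rw [hcx, mul_zero]
            calc c₀ * c₀ * x = c₀ * ((c₀ + d) * x) - (c₀ * d) * x := by ring
            _ = 0 := by rw [h2, hc₀d, zero_mul, sub_zero]
          calc (c₀ * x) * (c₀ * x) = (c₀ * c₀ * x) * x := by ring
          _ = 0 := by rw [h1, zero_mul]
        have hdx : d * x = 0 := by
          have h3 := hcx
          rw [add_mul, hc₀x, zero_add] at h3
          exact h3
        exact ⟨(hmemD c₀ x).mpr ⟨hax, hc₀x⟩, hdx⟩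
      have hdann' : d ∈ (D c').annihilator := by
        rw [Submodule.mem_annihilator]
        intro n hn
        rw [smul_eq_mul]
        exact (hDle n hn).2
      have hle : (D c₀).annihilator ≤ (D c').annihilator :=
        Submodule.annihilator_mono (fun x hx => (hDle x hx).1)
      have heq : (D c').annihilator = (D c₀).annihilator := by
        by_contra hne
        exact hmax _ ⟨c', hc'K, rfl⟩ (lt_of_le_of_ne hle (Ne.symm hne))
      rw [heq] at hdann'
      have : d * d = 0 := by
        have := Submodule.mem_annihilator.mp hdann' d hd
        rwa [smul_eq_mul] at this
      exact hdne (hred d this)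
    have hnz : (a + c₀) ∈ nonZeroDivisors Q := by
      rw [mem_nonZeroDivisors_iff_right]
      intro x hx
      have hxa : x * a = 0 := by
        apply hred
        have h1 : x * a * a = 0 := by
          have h2 : x * (a + c₀) * a = 0 := by rw [hx, zero_mul]
          calc x * a * a = x * (a + c₀) * a - x * (a * c₀) := by ring
          _ = 0 := by rw [h2, hc₀K, mul_zero, sub_zero]
        calc (x * a) * (x * a) = x * (x * a * a) := by ring
        _ = 0 := by rw [h1, mul_zero]
      have hxc : x * c₀ = 0 := by
        have h4 := hx
        rw [mul_add, hxa, zero_add] at h4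
        exact h4
      have : x ∈ D c₀ := (hmemD c₀ x).mpr ⟨by rw [mul_comm]; exact hxa,
        by rw [mul_comm]; exact hxc⟩
      rw [hD0] at this
      simpa using this
    obtain ⟨u, hu'⟩ := hnzd _ hnz
    set e : Q := a * ↑u⁻¹ with he'
    have hau : a * ↑u = a * a := by
      rw [hu', mul_add, hc₀K, add_zero]
    have he : e * e = e := by
      have h1 : e * e = (a * a) * (↑u⁻¹ * ↑u⁻¹ : Q) := by rw [he']; ring
      rw [← hau] at h1
      rw [h1, he']
      calc a * ↑u * ((↑u⁻¹ : Q) * ↑u⁻¹) = a * ↑u⁻¹ * (↑u * ↑u⁻¹) := by ring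
      _ = a * ↑u⁻¹ := by rw [Units.mul_inv, mul_one]
    rcases hidem e he with h | h
    · left
      have h2 : a = e * ↑u := by rw [he', mul_assoc, Units.inv_mul, mul_one]
      rw [h2, h, zero_mul]
    · right
      rw [he'] at h
      exact IsUnit.of_mul_eq_one _ h
  refine ⟨exists_pair_ne Q, mul_comm, ?_⟩
  intro a ha
  rcases main a with h | h
  · exact absurd h ha
  · obtain ⟨u, rfl⟩ := h
    exact ⟨↑u⁻¹, u.mul_inv⟩

/-- Let `R` be a one-dimensional far-flung Gorenstein local ring
satisfying conditions (a)-(c). Then `Hom_R(ω_R, R) ≅ R̄` as `R`-modules. -/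
theorem hom_canonical_ring_iso_integralClosure
    (R : Type*) [CommRing R] [IsNoetherianRing R] [IsLocalRing R]
    (hdim : ringKrullDim R = 1)
    (hCM : ∃ x ∈ maximalIdeal R, x ∈ nonZeroDivisors R)
    (C : Submodule R (FractionRing R))
    (hcan : IsCanonicalIdeal R C)
    (hRC : (1 : Submodule R (FractionRing R)) ≤ C)
    (hCRbar : C ≤ Subalgebra.toSubmodule (integralClosure R (FractionRing R)))
    (hfin : (Subalgebra.toSubmodule (integralClosure R (FractionRing R))).FG)
    (hloc : IsLocalRing (integralClosure R (FractionRing R)))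
    (hFFG : ((1 : Submodule R (FractionRing R)) / C) * C =
      (1 : Submodule R (FractionRing R)) /
        Subalgebra.toSubmodule (integralClosure R (FractionRing R))) :
    Nonempty ((C →ₗ[R] R) ≃ₗ[R]
      (Subalgebra.toSubmodule (integralClosure R (FractionRing R)) :
        Submodule R (FractionRing R))) := by
  classical
  haveI := hloc
  have hinj : Function.Injective (algebraMap R (FractionRing R)) :=
    IsFractionRing.injective R (FractionRing R)
  have hfield : IsField (FractionRing R) := FFG.isField R hCM hfin hloc
  letI : Field (FractionRing R) := hfield.toField
  haveI : IsDomain R :=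
    Function.Injective.isDomain (algebraMap R (FractionRing R)) hinj
  -- dimension ≤ 1
  haveI : Ring.DimensionLEOne R := by
    constructor
    intro p hp hprime
    by_contra hnm
    obtain ⟨m, hm, hpm⟩ := p.exists_le_maximal hprime.ne_top
    have hlt1 : (⊥ : Ideal R) < p := bot_lt_iff_ne_bot.mpr hp
    have hlt2 : p < m := lt_of_le_of_ne hpm (fun h => hnm (h ▸ hm))
    let f : Fin 3 → PrimeSpectrum R := ![⟨⊥, Ideal.bot_prime⟩, ⟨p, hprime⟩, ⟨m, hm.isPrime⟩]
    have hchain : ∀ i : Fin 2, f i.castSucc < f i.succ := by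
      intro i
      fin_cases i
      · exact hlt1
      · exact hlt2
    have hge := Order.LTSeries.length_le_krullDim
      (⟨2, f, hchain⟩ : LTSeries (PrimeSpectrum R))
    have h2 : Order.krullDim (PrimeSpectrum R) = 1 := hdim
    rw [h2] at hge
    norm_num at hge
  haveI : Algebra.IsAlgebraic R (FractionRing R) :=
    (IsFractionRing.comap_isAlgebraic_iff
      (A := R) (K := FractionRing R) (C := FractionRing R)).mpr
      (Algebra.IsAlgebraic.of_finite _ _)
  haveI hFR : IsFractionRing (integralClosure R (FractionRing R)) (FractionRing R) :=
    integralClosure.isFractionRing_of_algebraic (A := R) (L := FractionRing R)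
      (fun x hx => hinj (by rwa [map_zero]))
  haveI : IsNoetherianRing (integralClosure R (FractionRing R)) := by
    have h1 : IsNoetherian R
        (Subalgebra.toSubmodule (integralClosure R (FractionRing R))) :=
      isNoetherian_of_fg_of_noetherian _ hfin
    have h2 : IsNoetherian R (integralClosure R (FractionRing R)) := h1
    exact isNoetherian_of_tower R h2
  haveI : IsIntegrallyClosed (integralClosure R (FractionRing R)) :=
    (IsIntegrallyClosed.integralClosure_eq_bot_iff (FractionRing R)).mp integralClosure_idem
  haveI : IsPrincipalIdealRing (integralClosure R (FractionRing R)) := by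
    have h34 : IsIntegrallyClosed (integralClosure R (FractionRing R)) ∧
        ∀ P : Ideal (integralClosure R (FractionRing R)), P ≠ ⊥ → P.IsPrime →
          P = maximalIdeal (integralClosure R (FractionRing R)) :=
      ⟨inferInstance, fun P hP hP' => IsLocalRing.eq_maximalIdeal (hP'.isMaximal hP)⟩
    exact ((tfae_of_isNoetherianRing_of_isLocalRing_of_isDomain
      (integralClosure R (FractionRing R))).out 3 0).mp h34
  set Q := FractionRing R
  set M : Submodule R Q := Subalgebra.toSubmodule (integralClosure R Q)
  have honeC : (1 : Q) ∈ C := hRC (Submodule.mem_one.mpr ⟨1, map_one _⟩)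
  have honeM : (1 : Q) ∈ M := (Subalgebra.mem_toSubmodule _).mpr (one_mem _)
  -- Step A : 1/C = 1/M
  have hdiv : (1 : Submodule R Q) / C = (1 : Submodule R Q) / M := by
    apply le_antisymm
    · intro x hx
      rw [← hFFG]
      have h := Submodule.mul_mem_mul hx honeC
      rwa [mul_one] at h
    · intro x hx
      exact Submodule.mem_div_iff_forall_mul_mem.mpr fun y hy =>
        Submodule.mem_div_iff_forall_mul_mem.mp hx y (hCRbar hy)
  -- common denominator : an element of `R⁰` mapping into `1/M`
  obtain ⟨s, hsfin⟩ := hfin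
  obtain ⟨⟨r, hr⟩, hrden⟩ :=
    IsLocalization.exist_integer_multiples_of_finset (nonZeroDivisors R) s
  have htmem : algebraMap R Q r ∈ (1 : Submodule R Q) / M := by
    rw [Submodule.mem_div_iff_forall_mul_mem]
    intro y hy
    have hy' : y ∈ Submodule.span R (s : Set Q) := by rw [hsfin]; exact hy
    have hspan : Submodule.span R (s : Set Q) ≤
        Submodule.comap ((LinearMap.mul R Q) (algebraMap R Q r)) 1 := by
      rw [Submodule.span_le]
      intro z hz
      simp only [Set.mem_setOf_eq, SetLike.mem_coe, Submodule.mem_comap, LinearMap.mul_apply']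
      obtain ⟨w, hw⟩ := hrden z hz
      refine Submodule.mem_one.mpr ⟨w, ?_⟩
      rw [hw, Algebra.smul_def]
    simpa only [Submodule.mem_comap, LinearMap.mul_apply'] using hspan hy'
  -- the ideal of `R̄` corresponding to `1/M`
  let I : Ideal (integralClosure R Q) :=
    { carrier := {x | (x : Q) ∈ (1 : Submodule R Q) / M}
      add_mem' := fun {x y} hx hy => by
        simp only [Set.mem_setOf_eq] at *
        push_cast
        exact Submodule.add_mem _ hx hy
      zero_mem' := by
        simp only [Set.mem_setOf_eq]
        push_cast
        exact Submodule.zero_mem _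
      smul_mem' := by
        intro cc x hx
        simp only [Set.mem_setOf_eq, smul_eq_mul] at *
        rw [Submodule.mem_div_iff_forall_mul_mem]
        intro y hy
        have hyA : y ∈ integralClosure R Q := hy
        have hcy' : (cc : Q) * y ∈ integralClosure R Q := mul_mem cc.2 hyA
        have hcy : (cc : Q) * y ∈ M := hcy'
        have h := Submodule.mem_div_iff_forall_mul_mem.mp hx _ hcy
        have heq : ((cc * x : integralClosure R Q) : Q) * y = (x : Q) * ((cc : Q) * y) := by
          push_cast
          ring
        rwa [heq] }
  have htI : (⟨algebraMap R Q r, Subalgebra.algebraMap_mem _ r⟩ : integralClosure R Q) ∈ I :=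
    htmem
  obtain ⟨g, hg⟩ := (IsPrincipalIdealRing.principal I).principal
  have hg0 : (g : Q) ≠ 0 := by
    intro h0
    have hg0' : g = 0 := Subtype.ext h0
    rw [hg, hg0', Submodule.span_zero_singleton] at htI
    have h6 : algebraMap R Q r = 0 := by
      simpa using congrArg Subtype.val ((Submodule.mem_bot _).mp htI)
    exact nonZeroDivisors.ne_zero hr (hinj (by rwa [map_zero]))
  -- multiplication by `g` as a linear equivalence of `Q`
  obtain ⟨v, hv⟩ := hfield.mul_inv_cancel hg0
  have hv' : v * (g : Q) = 1 := by rw [mul_comm]; exact hv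
  let eQ : Q ≃ₗ[R] Q :=
    LinearEquiv.ofLinear (LinearMap.mul R Q (g : Q)) (LinearMap.mul R Q v)
      (by
        ext x
        show (g : Q) * (v * x) = x
        rw [← mul_assoc, hv, one_mul])
      (by
        ext x
        show v * ((g : Q) * x) = x
        rw [← mul_assoc, hv', one_mul])
  have hmap : Submodule.map (eQ : Q →ₗ[R] Q) M = (1 : Submodule R Q) / M := by
    apply le_antisymm
    · rintro _ ⟨m', hm', rfl⟩
      have hmR : m' ∈ integralClosure R Q := hm'
      have hmI : (⟨m', hmR⟩ * g : integralClosure R Q) ∈ I :=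
        I.mul_mem_left _ (hg ▸ Ideal.mem_span_singleton_self g)
      have hcoe : (eQ : Q →ₗ[R] Q) m' = ((⟨m', hmR⟩ * g : integralClosure R Q) : Q) := by
        show (g : Q) * m' = m' * (g : Q)
        exact mul_comm _ _
      rw [hcoe]
      exact hmI
    · intro x hx
      have hx1 : x ∈ (1 : Submodule R Q) := by
        have h := Submodule.mem_div_iff_forall_mul_mem.mp hx 1 honeM
        rwa [mul_one] at h
      obtain ⟨w, hw⟩ := Submodule.mem_one.mp hx1
      have hxR : x ∈ integralClosure R Q := hw ▸ Subalgebra.algebraMap_mem _ w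
      have hxI : (⟨x, hxR⟩ : integralClosure R Q) ∈ I := hx
      rw [hg] at hxI
      obtain ⟨c, hc⟩ := Ideal.mem_span_singleton'.mp hxI
      refine ⟨(c : Q), c.2, ?_⟩
      have hcc := congrArg Subtype.val hc
      push_cast at hcc
      show (g : Q) * (c : Q) = x
      rw [mul_comm]
      exact hcc
  exact ⟨(FFG.homEquivOneDiv C honeC).trans ((LinearEquiv.ofEq _ _ hdiv).trans
    ((LinearEquiv.ofEq _ _ hmap.symm).trans (eQ.submoduleMap M).symm))⟩
end
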